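/- arXiv:1703.05353 — 10 statements merged into one kernel-verified Lean document; each statement's English description precedes it below -/
import Mathlib

section
/- If vectors φ_1,...,φ_n in F^d (F = R or C, n ≥ d) are nonzero and have equal norms, then their coherence max_{j≠j'} |⟨φ_j,φ_{j'}⟩|/(‖φ_j‖‖φ_{j'}‖) is at least sqrt((n-d)/(d(n-1))). -/
/-!
Put the vectors as the columns of a `d × n` matrix `Φ`. The Gram matrix `ΦᴴΦ` and the frame
operator `ΦΦᴴ` have the same Frobenius norm (`tr (ΦᴴΦ)² = tr (ΦΦᴴ)²`), and Cauchy–Schwarz on the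
`d` diagonal entries of `ΦΦᴴ` bounds it below by `(tr ΦΦᴴ)² / d = (nβ)² / d`. Removing the `n`
diagonal entries `β²` of the Gram matrix leaves `n(n - 1)` off-diagonal entries of total squared
modulus at least `nβ²(n - d) / d`, so one of them has squared modulus at least
`β² (n - d) / (d (n - 1))`.
-/

open Finset Matrix

lemma exists_ne_offDiag_average_le {ι : Type*} [Fintype ι] (f : ι → ι → ℝ)
    (hι : 2 ≤ Fintype.card ι) :
    ∃ j j', j ≠ j' ∧
      (∑ j, ∑ j', f j j' - ∑ j, f j j) / (Fintype.card ι * (Fintype.card ι - 1)) ≤ f j j' := by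
  classical
  have hpos : 0 < (Fintype.card ι : ℝ) * (Fintype.card ι - 1) := by
    have : (2 : ℝ) ≤ Fintype.card ι := by exact_mod_cast hι
    nlinarith
  set n : ℝ := (Fintype.card ι : ℝ)
  have hsum : ∑ p ∈ univ.offDiag, f p.1 p.2 = ∑ j, ∑ j', f j j' - ∑ j, f j j := by
    rw [eq_sub_iff_add_eq, ← sum_diag (f := fun p : ι × ι => f p.1 p.2), add_comm,
      ← sum_union (disjoint_diag_offDiag _), diag_union_offDiag, univ_product_univ,
      Fintype.sum_prod_type]
  have hcard : ((univ : Finset ι).offDiag.card : ℝ) = n * (n - 1) := by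
    rw [offDiag_card, card_univ, Nat.cast_sub (Nat.le_mul_self _), Nat.cast_mul]
    ring
  have hne : (univ : Finset ι).offDiag.Nonempty := by
    rw [← card_pos, ← Nat.cast_pos (α := ℝ), hcard]
    exact hpos
  obtain ⟨⟨j, j'⟩, hp, hle⟩ := exists_le_of_sum_le hne
    (f := fun _ => (∑ j, ∑ j', f j j' - ∑ j, f j j) / (n * (n - 1)))
    (g := fun p => f p.1 p.2)
    (by rw [sum_const, nsmul_eq_mul, hcard, hsum, mul_div_cancel₀ _ hpos.ne'])
  exact ⟨j, j', (mem_offDiag.1 hp).2.2, hle⟩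

namespace Matrix

variable {𝕜 : Type*} [RCLike 𝕜] {ι κ : Type*} [Fintype ι] [Fintype κ]

omit [Fintype ι] in
lemma conjTranspose_mul_self_apply_self (A : Matrix κ ι 𝕜) (j : ι) :
    (Aᴴ * A) j j = ((∑ i, ‖A i j‖ ^ 2 : ℝ) : 𝕜) := by
  simp [Matrix.mul_apply, RCLike.conj_mul]

lemma re_trace_conjTranspose_mul_self (A : Matrix κ ι 𝕜) :
    RCLike.re (Aᴴ * A).trace = ∑ i, ∑ j, ‖A i j‖ ^ 2 := by
  simp [Matrix.trace, conjTranspose_mul_self_apply_self, sum_comm (γ := ι)]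

lemma sum_norm_sq_conjTranspose_mul_self_eq_sum_norm_sq_mul_conjTranspose_self
    (Φ : Matrix κ ι 𝕜) :
    ∑ j, ∑ j', ‖(Φᴴ * Φ) j j'‖ ^ 2 = ∑ i, ∑ k, ‖(Φ * Φᴴ) i k‖ ^ 2 := by
  rw [← re_trace_conjTranspose_mul_self, ← re_trace_conjTranspose_mul_self]
  simp only [conjTranspose_mul, conjTranspose_conjTranspose, Matrix.mul_assoc]
  rw [trace_mul_comm]
  simp only [Matrix.mul_assoc]

lemma sq_re_trace_le_card_mul_sum_norm_sq (B : Matrix κ κ 𝕜) :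
    RCLike.re B.trace ^ 2 ≤ Fintype.card κ * ∑ i, ∑ k, ‖B i k‖ ^ 2 := by
  calc RCLike.re B.trace ^ 2 = (∑ i, RCLike.re (B i i)) ^ 2 := by
        simp [Matrix.trace]
    _ ≤ Fintype.card κ * ∑ i, RCLike.re (B i i) ^ 2 := sq_sum_le_card_mul_sum_sq
    _ ≤ Fintype.card κ * ∑ i, ‖B i i‖ ^ 2 := by
        refine mul_le_mul_of_nonneg_left (sum_le_sum fun i _ => ?_) (Nat.cast_nonneg _)
        exact sq_le_sq.2 ((RCLike.abs_re_le_norm (B i i)).trans (le_abs_self _))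
    _ ≤ Fintype.card κ * ∑ i, ∑ k, ‖B i k‖ ^ 2 := by
        gcongr with i
        exact single_le_sum (f := fun k => ‖B i k‖ ^ 2) (fun _ _ => sq_nonneg _) (mem_univ i)

lemma sq_sum_norm_sq_le_card_mul_sum_norm_sq_conjTranspose_mul_self (Φ : Matrix κ ι 𝕜) :
    (∑ i, ∑ j, ‖Φ i j‖ ^ 2) ^ 2 ≤ Fintype.card κ * ∑ j, ∑ j', ‖(Φᴴ * Φ) j j'‖ ^ 2 := by
  rw [sum_norm_sq_conjTranspose_mul_self_eq_sum_norm_sq_mul_conjTranspose_self,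
    ← re_trace_conjTranspose_mul_self, trace_mul_comm]
  exact sq_re_trace_le_card_mul_sum_norm_sq _

theorem exists_ne_welch_le_norm_sq_conjTranspose_mul_self (Φ : Matrix κ ι 𝕜) (β : ℝ)
    (hβ : ∀ j, ∑ i, ‖Φ i j‖ ^ 2 = β) (hι : 2 ≤ Fintype.card ι) (hκ : 0 < Fintype.card κ) :
    ∃ j j', j ≠ j' ∧
      β ^ 2 * ((Fintype.card ι - Fintype.card κ) / (Fintype.card κ * (Fintype.card ι - 1)))
        ≤ ‖(Φᴴ * Φ) j j'‖ ^ 2 := by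
  obtain ⟨j, j', hjj', hle⟩ := exists_ne_offDiag_average_le (fun j j' => ‖(Φᴴ * Φ) j j'‖ ^ 2) hι
  refine ⟨j, j', hjj', le_trans ?_ hle⟩
  have hdiag : ∀ j, ‖(Φᴴ * Φ) j j‖ ^ 2 = β ^ 2 := fun j => by
    rw [conjTranspose_mul_self_apply_self, hβ, RCLike.norm_ofReal, sq_abs]
  have hframe := sq_sum_norm_sq_le_card_mul_sum_norm_sq_conjTranspose_mul_self Φ
  rw [sum_comm] at hframe
  simp only [hβ, hdiag, sum_const, card_univ, nsmul_eq_mul] at hframe ⊢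
  have hι' : (2 : ℝ) ≤ Fintype.card ι := by exact_mod_cast hι
  have hκ' : (0 : ℝ) < Fintype.card κ := by exact_mod_cast hκ
  rw [le_div_iff₀ (by nlinarith)]
  generalize (Fintype.card ι : ℝ) = n at *
  generalize (Fintype.card κ : ℝ) = d at *
  have hn1 : n - 1 ≠ 0 := by linarith
  calc β ^ 2 * ((n - d) / (d * (n - 1))) * (n * (n - 1))
        = ((n * β) ^ 2 - d * (n * β ^ 2)) / d := by field_simp
    _ ≤ _ := by
        rw [div_le_iff₀ hκ']
        linarith

end Matrix

lemma bddAbove_setOf_exists_eq_apply {α : Type*} [Finite α] (p : α → α → Prop)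
    (f : α → α → ℝ) : BddAbove {c | ∃ a b, p a b ∧ c = f a b} :=
  (Set.finite_range fun x : α × α => f x.1 x.2).bddAbove.mono <| by
    rintro _ ⟨a, b, -, rfl⟩
    exact ⟨(a, b), rfl⟩

/-- **Welch bound.** If nonzero equal-norm vectors `φ 1, …, φ n` in `𝕜^d` (`𝕜 = ℝ` or `ℂ`,
`n ≥ d`), then their coherence, the supremum over pairs `j ≠ j'` of
`|⟨φ j, φ j'⟩| / (‖φ j‖ ‖φ j'‖)`, is at least `√((n − d)/(d(n − 1)))`. -/
theorem welch_bound {𝕜 : Type*} [RCLike 𝕜] (d n : ℕ) (hd : 0 < d) (hdn : d ≤ n)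
    (φ : Fin n → Fin d → 𝕜)
    (hnz : ∀ j, φ j ≠ 0)
    (β : ℝ) (hnorm : ∀ j, ∑ i, ‖φ j i‖ ^ 2 = β) :
    Real.sqrt (((n : ℝ) - d) / (d * ((n : ℝ) - 1))) ≤
      sSup {c : ℝ | ∃ j j' : Fin n, j ≠ j' ∧
        c = ‖∑ i, (starRingEnd 𝕜) (φ j i) * φ j' i‖ /
          (Real.sqrt (∑ i, ‖φ j i‖ ^ 2) * Real.sqrt (∑ i, ‖φ j' i‖ ^ 2))} := by
  obtain hn | hn := lt_or_ge n 2
  -- `n = d = 1`: there are no pairs, `sSup ∅ = 0`, and the bound is `√(0 / 0) = 0`.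
  · obtain rfl : n = 1 := by omega
    obtain rfl : d = 1 := by omega
    simp
  set Φ : Matrix (Fin d) (Fin n) 𝕜 := Matrix.of fun i j => φ j i
  have hgram : ∀ j j', (Φᴴ * Φ) j j' = ∑ i, starRingEnd 𝕜 (φ j i) * φ j' i := fun _ _ => rfl
  have hβ : 0 < β := by
    obtain ⟨i, hi⟩ := Function.ne_iff.1 (hnz ⟨0, by omega⟩)
    rw [← hnorm ⟨0, by omega⟩]
    exact sum_pos' (fun _ _ => by positivity) ⟨i, mem_univ _, pow_pos (norm_pos_iff.2 hi) 2⟩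
  obtain ⟨j, j', hjj', hle⟩ :=
    exists_ne_welch_le_norm_sq_conjTranspose_mul_self Φ β hnorm (by simpa using hn)
      (by simpa using hd)
  simp only [Fintype.card_fin, hgram] at hle
  refine le_trans ?_ (le_csSup (bddAbove_setOf_exists_eq_apply _ _) ⟨j, j', hjj', rfl⟩)
  rw [hnorm, hnorm, Real.mul_self_sqrt hβ.le, Real.sqrt_le_iff]
  refine ⟨by positivity, ?_⟩
  rwa [div_pow, le_div_iff₀ (by positivity), mul_comm]
end

section
/- For a BIBD(v,k,λ,r,b), one necessarily has b ≥ v (Fisher's inequality). -/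
/-!
Let `N` be the `b × v` incidence matrix of the design. Its Gram matrix `Nᵀ N` has `r` on the
diagonal and `λ` off it, i.e. `Nᵀ N = (r - λ) I + λ J`. Since `k < v`, a block through a point
misses some other point, so `λ < r`; then `(r - λ) I + λ J` is positive definite, hence invertible,
and `v = rank (Nᵀ N) ≤ rank N ≤ b`.
-/

open Finset Matrix

namespace Matrix

variable {m n R : Type*} [Fintype m] [Fintype n] [DecidableEq n]

theorem card_le_card_of_isUnit_mul [CommSemiring R] [StrongRankCondition R]
    {A : Matrix n m R} {N : Matrix m n R} (h : IsUnit (A * N)) :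
    Fintype.card n ≤ Fintype.card m :=
  calc Fintype.card n = (A * N).rank := (rank_of_isUnit _ h).symm
    _ ≤ N.rank := rank_mul_le_right A N
    _ ≤ Fintype.card m := rank_le_card_height N

theorem posDef_smul_one_add_smul_ones {K : Type*} [Field K] [PartialOrder K] [StarRing K]
    [StarOrderedRing K] {a c : K} (ha : 0 < a) (hc : 0 ≤ c) :
    (a • (1 : Matrix n n K) + c • of fun _ _ => 1).PosDef := by
  have hJ : (of fun _ _ => (1 : K) : Matrix n n K).PosSemidef := by
    simpa [vecMulVec] using posSemidef_vecMulVec_self_star (1 : n → K)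
  exact (PosDef.one.smul ha).add_posSemidef (hJ.smul hc)

end Matrix

section Design

variable {ι α : Type*} [Fintype ι] [DecidableEq α]

def incidenceMatrix (R : Type*) [Zero R] [One R] (B : ι → Finset α) : Matrix ι α R :=
  of fun i x => if x ∈ B i then 1 else 0

theorem transpose_incidenceMatrix_mul_self_apply {R : Type*} [NonAssocSemiring R]
    (B : ι → Finset α) (x y : α) :
    ((incidenceMatrix R B)ᵀ * incidenceMatrix R B) x y = #{i | x ∈ B i ∧ y ∈ B i} := by
  simp [incidenceMatrix, mul_apply, ← ite_and, sum_boole, and_comm]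

theorem transpose_incidenceMatrix_mul_self_eq {R : Type*} [Ring R] {B : ι → Finset α}
    {r lam : ℕ} (hdeg : ∀ x, #{i | x ∈ B i} = r)
    (hpair : ∀ x y, x ≠ y → #{i | x ∈ B i ∧ y ∈ B i} = lam) :
    (incidenceMatrix R B)ᵀ * incidenceMatrix R B
      = ((r : R) - lam) • (1 : Matrix α α R) + (lam : R) • of fun _ _ => 1 := by
  ext x y
  rw [transpose_incidenceMatrix_mul_self_apply]
  obtain rfl | hxy := eq_or_ne x y
  · simp [hdeg]
  · simp [hpair x y hxy, hxy]

variable [Fintype α] {B : ι → Finset α} {r lam : ℕ}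

theorem lam_lt_of_mem_of_ne_univ {x : α} {j : ι} (hx : x ∈ B j) (hj : B j ≠ univ)
    (hdeg : #{i | x ∈ B i} = r) (hpair : ∀ y, x ≠ y → #{i | x ∈ B i ∧ y ∈ B i} = lam) :
    lam < r := by
  obtain ⟨y, hy⟩ : ∃ y, y ∉ B j := by simpa [eq_univ_iff_forall] using hj
  rw [← hdeg, ← hpair y (ne_of_mem_of_not_mem hx hy), ← filter_filter]
  exact card_lt_card (filter_ssubset.2 ⟨j, by simpa using hx, hy⟩)

theorem card_le_card_of_pairwise_balanced (hdeg : ∀ x, #{i | x ∈ B i} = r)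
    (hpair : ∀ x y, x ≠ y → #{i | x ∈ B i ∧ y ∈ B i} = lam) (hlr : lam < r) :
    Fintype.card α ≤ Fintype.card ι := by
  have hpos : ((incidenceMatrix ℚ B)ᵀ * incidenceMatrix ℚ B).PosDef := by
    rw [transpose_incidenceMatrix_mul_self_eq hdeg hpair]
    exact posDef_smul_one_add_smul_ones (by simpa using hlr) (Nat.cast_nonneg _)
  exact card_le_card_of_isUnit_mul hpos.isUnit

end Design

/-- **Fisher's inequality.** For a `BIBD(v,k,λ,r,b)` one necessarily has `b ≥ v`. -/
theorem fisher_inequality (v k lam r b : ℕ) (hvk : k < v) (hk : 0 < k) (hb : 0 < b)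
    (B : Fin b → Finset (Fin v))
    (hcard : ∀ i, (B i).card = k)
    (hdeg : ∀ x : Fin v, (Finset.univ.filter fun i => x ∈ B i).card = r)
    (hpair : ∀ x y : Fin v, x ≠ y →
      (Finset.univ.filter fun i => x ∈ B i ∧ y ∈ B i).card = lam) :
    v ≤ b := by
  let i₀ : Fin b := ⟨0, hb⟩
  obtain ⟨x, hx⟩ : (B i₀).Nonempty := card_pos.1 (hcard i₀ ▸ hk)
  have hne : B i₀ ≠ univ := fun h => hvk.ne' (by simpa [h] using hcard i₀)
  have hlr : lam < r := lam_lt_of_mem_of_ne_univ hx hne (hdeg x) (hpair x)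
  simpa using card_le_card_of_pairwise_balanced hdeg hpair hlr
end

section
/- Let Π be a BIBD permutation matrix of a BIBD(v,k,1,r,b), F and G be possibly-complex Hadamard matrices of sizes k and r+1 respectively, G = [G_1 g_2] with G_1 of size (r+1)×r, and for l = 1,...,k set Φ_l := (I_b ⊗ f_l*) Π (I_v ⊗ G_1*), where f_l is the l-th column of F. Then Φ_l Φ_{l'}* = k(r+1)·I_b if l = l' and 0 if l ≠ l'. In particular, the columns of each Φ_l form a tight frame for F^b and the row spaces of the Φ_l are mutually orthogonal. -/
open scoped Kronecker

/-- The Steiner ETF synthesis operator `Φ_l = (I_b ⊗ f_l*) Π (I_v ⊗ G₁*)`, where `f_l` is the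
`l`-th column of `F` and `G₁` consists of the first `r` columns of `G`. -/
noncomputable def steinerPhi (v k r b : ℕ) (P : Matrix (Fin b × Fin k) (Fin v × Fin r) ℂ)
    (F : Matrix (Fin k) (Fin k) ℂ) (G : Matrix (Fin (r + 1)) (Fin (r + 1)) ℂ) (l : Fin k) :
    Matrix (Fin b × Fin 1) (Fin v × Fin (r + 1)) ℂ :=
  ((1 : Matrix (Fin b) (Fin b) ℂ) ⊗ₖ (Matrix.of fun (_ : Fin 1) (p : Fin k) => star (F p l)))
    * P * ((1 : Matrix (Fin v) (Fin v) ℂ) ⊗ₖ (G.submatrix id Fin.castSucc).conjTranspose)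


lemma kron_conjTranspose {l m n p : Type*} (A : Matrix l m ℂ) (B : Matrix n p ℂ) :
    (A ⊗ₖ B).conjTranspose = A.conjTranspose ⊗ₖ B.conjTranspose := by
  ext ⟨a, b⟩ ⟨c, d⟩
  simp [Matrix.conjTranspose_apply, mul_comm]

lemma star_comm_of_mul {n : ℕ} (A : Matrix (Fin n) (Fin n) ℂ) (c : ℂ) (hc : c ≠ 0)
    (h : A * A.conjTranspose = c • 1) : A.conjTranspose * A = c • 1 := by
  have h1 : A * (c⁻¹ • A.conjTranspose) = 1 := by
    rw [Matrix.mul_smul, h, smul_smul, inv_mul_cancel₀ hc, one_smul]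
  have h2 := mul_eq_one_comm.mp h1
  calc A.conjTranspose * A = c • ((c⁻¹ • A.conjTranspose) * A) := by
        rw [Matrix.smul_mul, smul_smul, mul_inv_cancel₀ hc, one_smul]
    _ = c • 1 := by rw [h2]

/-- For a BIBD permutation matrix `Π` of a `BIBD(v,k,1,r,b)` and complex Hadamard matrices
`F`, `G` of sizes `k` and `r+1`, the matrices `Φ_l = (I_b ⊗ f_l*) Π (I_v ⊗ G₁*)` satisfy
`Φ_l Φ_{l'}* = k(r+1) I_b` for `l = l'` and `0` for `l ≠ l'`; in particular the columns of
each `Φ_l` form a tight frame for `ℂ^b` and the row spaces of the `Φ_l` are mutually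
orthogonal. -/
theorem steiner_phi_tight_and_orthogonal (v k r b : ℕ) (hvk : k < v) (hk : 0 < k) (hb : 0 < b)
    (P : Matrix (Fin b × Fin k) (Fin v × Fin r) ℂ)
    (e : (Fin b × Fin k) ≃ (Fin v × Fin r))
    (hP : ∀ a c, P a c = if e a = c then 1 else 0)
    (hX01 : ∀ i j, (∑ p, ∑ q, P (i, p) (j, q)) = 0 ∨ (∑ p, ∑ q, P (i, p) (j, q)) = 1)
    (hrow : ∀ i, ∑ j, ∑ p, ∑ q, P (i, p) (j, q) = (k : ℂ))
    (hcol : ∀ j, ∑ i, ∑ p, ∑ q, P (i, p) (j, q) = (r : ℂ))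
    (hlam : ∀ j j' : Fin v, j ≠ j' →
      ∑ i, (∑ p, ∑ q, P (i, p) (j, q)) * (∑ p, ∑ q, P (i, p) (j', q)) = 1)
    (F : Matrix (Fin k) (Fin k) ℂ) (hFu : ∀ p l, ‖F p l‖ = 1)
    (hF : F * F.conjTranspose = (k : ℂ) • 1)
    (G : Matrix (Fin (r + 1)) (Fin (r + 1)) ℂ) (hGu : ∀ s t, ‖G s t‖ = 1)
    (hG : G * G.conjTranspose = ((r : ℂ) + 1) • 1)
    (l l' : Fin k) :
    steinerPhi v k r b P F G l * (steinerPhi v k r b P F G l').conjTranspose =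
      if l = l' then ((k : ℂ) * ((r : ℂ) + 1)) • 1 else 0 := by
  classical
  have hk0 : (k : ℂ) ≠ 0 := Nat.cast_ne_zero.mpr hk.ne'
  have hr0 : ((r : ℂ) + 1) ≠ 0 := by
    have : ((r + 1 : ℕ) : ℂ) ≠ 0 := Nat.cast_ne_zero.mpr (Nat.succ_ne_zero r)
    push_cast at this; exact this
  have hF' := star_comm_of_mul F _ hk0 hF
  have hG' := star_comm_of_mul G _ hr0 hG
  set G1 := G.submatrix id Fin.castSucc with hG1def
  have hG1 : G1.conjTranspose * G1 = ((r : ℂ) + 1) • (1 : Matrix (Fin r) (Fin r) ℂ) := by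
    ext s t
    have h := congrFun (congrFun hG' s.castSucc) t.castSucc
    simp only [Matrix.mul_apply, Matrix.conjTranspose_apply, Matrix.smul_apply,
      Matrix.one_apply, Matrix.submatrix_apply, id, smul_eq_mul, hG1def] at h ⊢
    rw [h]
    simp [Fin.castSucc_inj]
  have hPP : P * P.conjTranspose = 1 := by
    ext a a'
    simp only [Matrix.mul_apply, Matrix.conjTranspose_apply, hP, Matrix.one_apply,
      apply_ite (star : ℂ → ℂ), star_one, star_zero, ite_mul, one_mul, zero_mul]
    rw [Finset.sum_ite_eq Finset.univ (e a)]
    simp [e.apply_eq_iff_eq, eq_comm]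
  set Ml : Matrix (Fin 1) (Fin k) ℂ := Matrix.of fun _ p => star (F p l) with hMl
  set Ml' : Matrix (Fin 1) (Fin k) ℂ := Matrix.of fun _ p => star (F p l') with hMl'
  have hMM : Ml * Ml'.conjTranspose =
      ((F.conjTranspose * F) l l') • (1 : Matrix (Fin 1) (Fin 1) ℂ) := by
    ext i j
    fin_cases i; fin_cases j
    simp [Matrix.mul_apply, Matrix.conjTranspose_apply, hMl, hMl', Matrix.one_apply]
  have key : steinerPhi v k r b P F G l * (steinerPhi v k r b P F G l').conjTranspose =
      (((r : ℂ) + 1) * ((F.conjTranspose * F) l l')) • (1 : Matrix (Fin b × Fin 1) (Fin b × Fin 1) ℂ) := by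
    unfold steinerPhi
    rw [← hG1def, ← hMl, ← hMl']
    rw [Matrix.conjTranspose_mul, Matrix.conjTranspose_mul, kron_conjTranspose,
      kron_conjTranspose, Matrix.conjTranspose_one, Matrix.conjTranspose_one,
      Matrix.conjTranspose_conjTranspose]
    calc ((1 : Matrix (Fin b) (Fin b) ℂ) ⊗ₖ Ml) * P * ((1 : Matrix (Fin v) (Fin v) ℂ) ⊗ₖ G1.conjTranspose)
          * ((1 : Matrix (Fin v) (Fin v) ℂ) ⊗ₖ G1 * (P.conjTranspose * ((1 : Matrix (Fin b) (Fin b) ℂ) ⊗ₖ Ml'.conjTranspose)))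
        = ((1 : Matrix (Fin b) (Fin b) ℂ) ⊗ₖ Ml) * ((P * (((1 : Matrix (Fin v) (Fin v) ℂ) ⊗ₖ G1.conjTranspose)
            * ((1 : Matrix (Fin v) (Fin v) ℂ) ⊗ₖ G1)) * P.conjTranspose) * ((1 : Matrix (Fin b) (Fin b) ℂ) ⊗ₖ Ml'.conjTranspose)) := by
          simp only [Matrix.mul_assoc]
      _ = (((r : ℂ) + 1) * ((F.conjTranspose * F) l l')) • 1 := by
          rw [← Matrix.mul_kronecker_mul, one_mul, hG1, Matrix.kronecker_smul,
            Matrix.one_kronecker_one, Matrix.mul_smul, Matrix.smul_mul, Matrix.mul_one,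
            hPP, Matrix.smul_mul, Matrix.one_mul, Matrix.mul_smul,
            ← Matrix.mul_kronecker_mul, one_mul, hMM,
            Matrix.kronecker_smul, Matrix.one_kronecker_one, smul_smul]
  have hFe := congrFun (congrFun hF' l) l'
  simp only [Matrix.smul_apply, Matrix.one_apply, smul_eq_mul] at hFe
  by_cases h : l = l'
  · rw [key, hFe, if_pos h, if_pos h, mul_one]; congr 1; ring
  · rw [key, hFe, if_neg h, if_neg h, mul_zero, mul_zero, zero_smul]
end

section
/- With Φ_l as in the Steiner ETF construction and g_2 the last column of G, the matrix Φ̃_1 obtained by stacking Φ_2,...,Φ_k and √k·(I_v ⊗ g_2*) is a Naimark complement of Φ_1: the rows of [Φ_1; Φ̃_1] are pairwise orthogonal and all have squared norm k(r+1), and Φ̃_1 has b(k−1)+v = v(r+1) − b rows. -/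
/-!
Write the stack as `[Φ; √k (I_v ⊗ g₂*)]`, where `Φ` stacks all the `Φ_l`. As `Π` is a
permutation matrix, `Π Π* = I`, and as `F`, `G` are square with `F F* = k I` and `G G* = (r+1) I`,
also `F* F = k I` and `G* G = (r+1) I`: the columns of `F`, `G` are orthogonal. Hence
`Φ_l Φ_l'* = (I ⊗ f_l*) Π (I ⊗ G₁* G₁) Π* (I ⊗ f_l') = (r+1) (I ⊗ f_l* f_l') = δ_{ll'} k (r+1) I`,
`Φ_l (I ⊗ g₂) = 0` because `G₁* g₂ = 0`, and `k (I ⊗ g₂*) (I ⊗ g₂) = k (r+1) I`.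
The row count is `b k = v r`, read off from the bijection underlying `Π`.
-/

open scoped Kronecker

/-- The matrix obtained by stacking all the `Φ_l`, `l = 1, …, k`, together with
`√k (I_v ⊗ g₂*)`, where `g₂` is the last column of `G`.  Its rows are the rows of `Φ₁`
(`l = 0`) together with those of the Naimark complement `Φ̃₁` of the paper. -/
noncomputable def steinerStack (v k r b : ℕ) (P : Matrix (Fin b × Fin k) (Fin v × Fin r) ℂ)
    (F : Matrix (Fin k) (Fin k) ℂ) (G : Matrix (Fin (r + 1)) (Fin (r + 1)) ℂ) :
    Matrix ((Fin k × (Fin b × Fin 1)) ⊕ (Fin v × Fin 1)) (Fin v × Fin (r + 1)) ℂ :=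
  fun w c => match w with
    | Sum.inl (l, a) => steinerPhi v k r b P F G l a c
    | Sum.inr a => (Real.sqrt k : ℂ) *
        ((1 : Matrix (Fin v) (Fin v) ℂ) ⊗ₖ
          (Matrix.of fun (_ : Fin 1) (s : Fin (r + 1)) => star (G s (Fin.last r)))) a c

namespace Matrix

variable {ι l m n p q R : Type*}

lemma one_kronecker_mul_conjTranspose_one_kronecker [CommSemiring R] [StarRing R] [Fintype l]
    [Fintype m] [DecidableEq l] (A : Matrix p m R) (B : Matrix q m R) :
    ((1 : Matrix l l R) ⊗ₖ A) * ((1 : Matrix l l R) ⊗ₖ B)ᴴ = (1 : Matrix l l R) ⊗ₖ (A * Bᴴ) := by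
  rw [conjTranspose_kronecker, conjTranspose_one, ← mul_kronecker_mul, one_mul]

lemma conjTranspose_submatrix_id_mul_submatrix_id [Semiring R] [StarRing R] [Fintype m]
    [DecidableEq n] {G : Matrix m n R} {c : R} (hG : Gᴴ * G = c • 1) (σ : p → n) (τ : q → n) :
    (G.submatrix id σ)ᴴ * G.submatrix id τ = c • (1 : Matrix n n R).submatrix σ τ := by
  rw [conjTranspose_submatrix, ← submatrix_mul _ _ _ _ _ Function.bijective_id, hG]
  rfl

lemma conjTranspose_mul_self_eq_smul_one [Field R] [StarRing R] [Fintype n] [DecidableEq n]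
    {A : Matrix n n R} {c : R} (hc : c ≠ 0) (h : A * Aᴴ = c • 1) : Aᴴ * A = c • 1 := by
  have hinv : (c⁻¹ • Aᴴ) * A = 1 :=
    mul_eq_one_comm.mp (by rw [Matrix.mul_smul, h, smul_smul, inv_mul_cancel₀ hc, one_smul])
  rwa [Matrix.smul_mul, inv_smul_eq_iff₀ hc] at hinv

lemma mul_conjTranspose_eq_one_of_equiv [Semiring R] [StarRing R] [Fintype n] [DecidableEq m]
    [DecidableEq n] (e : m ≃ n) {P : Matrix m n R} (hP : ∀ a c, P a c = if e a = c then 1 else 0) :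
    P * Pᴴ = 1 := by
  have hPe : P = e.toPEquiv.toMatrix := by
    ext a c
    simp [hP, PEquiv.toMatrix_apply]
  ext a a'
  rw [hPe, PEquiv.toMatrix_toPEquiv_mul]
  simp [PEquiv.toMatrix_apply, one_apply, e.injective.eq_iff, eq_comm, apply_ite star]

def stackRows (Φ : ι → Matrix m n R) : Matrix (ι × m) n R :=
  of fun w c => Φ w.1 w.2 c

lemma stackRows_mul [Semiring R] [Fintype n] (Φ : ι → Matrix m n R) (M : Matrix n p R) :
    stackRows Φ * M = stackRows fun i => Φ i * M :=
  rfl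

lemma stackRows_mul_conjTranspose_stackRows [Semiring R] [StarRing R] [Fintype n] [DecidableEq ι]
    [DecidableEq m] (Φ : ι → Matrix m n R) (c : R)
    (hΦ : ∀ i j, Φ i * (Φ j)ᴴ = if i = j then c • 1 else 0) :
    stackRows Φ * (stackRows Φ)ᴴ = c • 1 := by
  ext ⟨i, a⟩ ⟨j, a'⟩
  change (Φ i * (Φ j)ᴴ) a a' = _
  rw [hΦ]
  by_cases hij : i = j <;> simp [hij, one_apply]

lemma fromRows_mul_conjTranspose_fromRows [Semiring R] [StarRing R] [Fintype n] [DecidableEq l]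
    [DecidableEq m] {A : Matrix l n R} {B : Matrix m n R} {c : R} (hA : A * Aᴴ = c • 1)
    (hB : B * Bᴴ = c • 1) (hAB : A * Bᴴ = 0) : fromRows A B * (fromRows A B)ᴴ = c • 1 := by
  have hBA : B * Aᴴ = 0 := by
    rw [← conjTranspose_conjTranspose B, ← conjTranspose_mul, hAB, conjTranspose_zero]
  rw [conjTranspose_fromRows_eq_fromCols_conjTranspose, fromRows_mul_fromCols, hA, hB, hAB, hBA,
    ← fromBlocks_one, fromBlocks_smul, smul_zero, smul_zero]

end Matrix

open Matrix

noncomputable def steinerLastRows (v k r : ℕ) (G : Matrix (Fin (r + 1)) (Fin (r + 1)) ℂ) :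
    Matrix (Fin v × Fin 1) (Fin v × Fin (r + 1)) ℂ :=
  (√k : ℂ) • ((1 : Matrix (Fin v) (Fin v) ℂ) ⊗ₖ (G.submatrix id fun _ : Fin 1 => Fin.last r)ᴴ)

section Steiner

variable {v k r b : ℕ} {P : Matrix (Fin b × Fin k) (Fin v × Fin r) ℂ}
  {F : Matrix (Fin k) (Fin k) ℂ} {G : Matrix (Fin (r + 1)) (Fin (r + 1)) ℂ}

lemma steinerPhi_eq (l : Fin k) :
    steinerPhi v k r b P F G l =
      ((1 : Matrix (Fin b) (Fin b) ℂ) ⊗ₖ (F.submatrix id fun _ : Fin 1 => l)ᴴ) * P *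
        ((1 : Matrix (Fin v) (Fin v) ℂ) ⊗ₖ (G.submatrix id Fin.castSucc)ᴴ) :=
  rfl

lemma steinerStack_eq_fromRows :
    steinerStack v k r b P F G =
      fromRows (stackRows (steinerPhi v k r b P F G)) (steinerLastRows v k r G) := by
  ext (w | w) c <;> rfl

lemma steinerPhi_mul_conjTranspose (hP : P * Pᴴ = 1) (hF : Fᴴ * F = (k : ℂ) • 1)
    (hG : Gᴴ * G = ((r : ℂ) + 1) • 1) (l l' : Fin k) :
    steinerPhi v k r b P F G l * (steinerPhi v k r b P F G l')ᴴ =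
      if l = l' then ((k : ℂ) * ((r : ℂ) + 1)) • 1 else 0 := by
  have hδ : (1 : Matrix (Fin k) (Fin k) ℂ).submatrix (fun _ : Fin 1 => l) (fun _ => l') =
      if l = l' then (1 : Matrix (Fin 1) (Fin 1) ℂ) else 0 := by
    split_ifs with h
    · subst h; ext i j; simp [one_apply, Subsingleton.elim i j]
    · ext; simp [one_apply, h]
  rw [steinerPhi_eq, steinerPhi_eq, conjTranspose_mul, conjTranspose_mul]
  simp only [Matrix.mul_assoc]
  rw [← Matrix.mul_assoc ((1 : Matrix (Fin v) (Fin v) ℂ) ⊗ₖ _),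
    one_kronecker_mul_conjTranspose_one_kronecker, conjTranspose_conjTranspose,
    conjTranspose_submatrix_id_mul_submatrix_id hG,
    submatrix_one _ (Fin.castSucc_injective r), kronecker_smul, one_kronecker_one, Matrix.smul_mul,
    Matrix.one_mul, Matrix.mul_smul, ← Matrix.mul_assoc P, hP, Matrix.one_mul, Matrix.mul_smul,
    one_kronecker_mul_conjTranspose_one_kronecker, conjTranspose_conjTranspose,
    conjTranspose_submatrix_id_mul_submatrix_id hF, hδ]
  split_ifs
  · rw [kronecker_smul, one_kronecker_one, smul_smul, mul_comm]
  · rw [smul_zero, kronecker_zero, smul_zero]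

lemma steinerPhi_mul_conjTranspose_lastCol (hG : Gᴴ * G = ((r : ℂ) + 1) • 1) (l : Fin k) :
    steinerPhi v k r b P F G l *
      ((1 : Matrix (Fin v) (Fin v) ℂ) ⊗ₖ (G.submatrix id fun _ : Fin 1 => Fin.last r)ᴴ)ᴴ = 0 := by
  have horth : (1 : Matrix (Fin (r + 1)) (Fin (r + 1)) ℂ).submatrix Fin.castSucc
      (fun _ : Fin 1 => Fin.last r) = 0 := by
    ext q; simp [one_apply, Fin.castSucc_ne_last q]
  rw [steinerPhi_eq, Matrix.mul_assoc, one_kronecker_mul_conjTranspose_one_kronecker,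
    conjTranspose_conjTranspose, conjTranspose_submatrix_id_mul_submatrix_id hG, horth, smul_zero,
    kronecker_zero, Matrix.mul_zero]

lemma stackRows_steinerPhi_mul_conjTranspose_steinerLastRows
    (hG : Gᴴ * G = ((r : ℂ) + 1) • 1) :
    stackRows (steinerPhi v k r b P F G) * (steinerLastRows v k r G)ᴴ = 0 := by
  rw [steinerLastRows, conjTranspose_smul, Matrix.mul_smul, stackRows_mul]
  simp only [steinerPhi_mul_conjTranspose_lastCol hG]
  exact smul_zero _

lemma steinerLastRows_mul_conjTranspose (hG : Gᴴ * G = ((r : ℂ) + 1) • 1) :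
    steinerLastRows v k r G * (steinerLastRows v k r G)ᴴ = ((k : ℂ) * ((r : ℂ) + 1)) • 1 := by
  have hsqrt : (√k : ℂ) * star (√k : ℂ) = k := by
    rw [Complex.star_def, Complex.conj_ofReal, ← Complex.ofReal_mul,
      Real.mul_self_sqrt (Nat.cast_nonneg k), Complex.ofReal_natCast]
  rw [steinerLastRows, conjTranspose_smul, Matrix.smul_mul, Matrix.mul_smul,
    one_kronecker_mul_conjTranspose_one_kronecker, conjTranspose_conjTranspose,
    conjTranspose_submatrix_id_mul_submatrix_id hG,
    submatrix_one _ fun _ _ _ => Subsingleton.elim _ _, kronecker_smul, one_kronecker_one,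
    smul_smul, smul_smul, hsqrt]

end Steiner

lemma mul_sub_one_add_eq_mul_add_one_sub_of_mul_eq {b k v r : ℕ} (hk : 0 < k) (h : b * k = v * r) :
    b * (k - 1) + v = v * (r + 1) - b := by
  have hb : b ≤ b * k := Nat.le_mul_of_pos_right b hk
  rw [Nat.mul_sub_one, Nat.mul_succ]
  omega

theorem steiner_naimark_complement_general (v k r b : ℕ) (hk : 0 < k)
    (P : Matrix (Fin b × Fin k) (Fin v × Fin r) ℂ)
    (e : (Fin b × Fin k) ≃ (Fin v × Fin r))
    (hP : ∀ a c, P a c = if e a = c then 1 else 0)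
    (F : Matrix (Fin k) (Fin k) ℂ)
    (hF : F * F.conjTranspose = (k : ℂ) • 1)
    (G : Matrix (Fin (r + 1)) (Fin (r + 1)) ℂ)
    (hG : G * G.conjTranspose = ((r : ℂ) + 1) • 1) :
    steinerStack v k r b P F G * (steinerStack v k r b P F G).conjTranspose =
        ((k : ℂ) * ((r : ℂ) + 1)) • 1 ∧
    b * (k - 1) + v = v * (r + 1) - b := by
  have hF' := conjTranspose_mul_self_eq_smul_one (Nat.cast_ne_zero.mpr hk.ne') hF
  have hG' := conjTranspose_mul_self_eq_smul_one (Nat.cast_add_one_ne_zero r) hG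
  refine ⟨?_, mul_sub_one_add_eq_mul_add_one_sub_of_mul_eq hk (by simpa using Fintype.card_congr e)⟩
  rw [steinerStack_eq_fromRows]
  exact fromRows_mul_conjTranspose_fromRows
    (stackRows_mul_conjTranspose_stackRows _ _
      (steinerPhi_mul_conjTranspose (mul_conjTranspose_eq_one_of_equiv e hP) hF' hG'))
    (steinerLastRows_mul_conjTranspose hG')
    (stackRows_steinerPhi_mul_conjTranspose_steinerLastRows hG')

/-- **Naimark complement of a Steiner ETF.** Stacking `Φ₂, …, Φ_k` and `√k (I_v ⊗ g₂*)`
yields a Naimark complement `Φ̃₁` of `Φ₁`:  all the rows of `[Φ₁; Φ̃₁]` are pairwise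
orthogonal with squared norm `k(r+1)`, and `Φ̃₁` has `b(k−1) + v = v(r+1) − b` rows. -/
theorem steiner_naimark_complement (v k r b : ℕ) (hvk : k < v) (hk : 0 < k) (hb : 0 < b)
    (P : Matrix (Fin b × Fin k) (Fin v × Fin r) ℂ)
    (e : (Fin b × Fin k) ≃ (Fin v × Fin r))
    (hP : ∀ a c, P a c = if e a = c then 1 else 0)
    (hX01 : ∀ i j, (∑ p, ∑ q, P (i, p) (j, q)) = 0 ∨ (∑ p, ∑ q, P (i, p) (j, q)) = 1)
    (hrow : ∀ i, ∑ j, ∑ p, ∑ q, P (i, p) (j, q) = (k : ℂ))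
    (hcol : ∀ j, ∑ i, ∑ p, ∑ q, P (i, p) (j, q) = (r : ℂ))
    (hlam : ∀ j j' : Fin v, j ≠ j' →
      ∑ i, (∑ p, ∑ q, P (i, p) (j, q)) * (∑ p, ∑ q, P (i, p) (j', q)) = 1)
    (F : Matrix (Fin k) (Fin k) ℂ) (hFu : ∀ p l, ‖F p l‖ = 1)
    (hF : F * F.conjTranspose = (k : ℂ) • 1)
    (G : Matrix (Fin (r + 1)) (Fin (r + 1)) ℂ) (hGu : ∀ s t, ‖G s t‖ = 1)
    (hG : G * G.conjTranspose = ((r : ℂ) + 1) • 1) :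
    steinerStack v k r b P F G * (steinerStack v k r b P F G).conjTranspose =
        ((k : ℂ) * ((r : ℂ) + 1)) • 1 ∧
    b * (k - 1) + v = v * (r + 1) - b :=
  steiner_naimark_complement_general v k r b hk P e hP F hF G hG
end

section
/- If F and G are real Hadamard matrices of sizes k and r+1 respectively arising from a BIBD(v,k,1,r,b), then k = 2. -/
/-- If real Hadamard matrices `F` and `G` of sizes `k` and `r+1` exist for a
`BIBD(v,k,1,r,b)` (so `k` and `r+1` are each `2` or divisible by `4`), then `k = 2`. -/
theorem steiner_real_forces_k_two (v k r b : ℕ) (hvk : k < v) (hk2 : 2 ≤ k) (hb : 0 < b)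
    (h1 : b * k = v * r) (h2 : v - 1 = r * (k - 1))
    (hkH : k = 2 ∨ 4 ∣ k) (hrH : r + 1 = 2 ∨ 4 ∣ (r + 1)) :
    k = 2 := by
  rcases hkH with hk | ⟨a, ha⟩
  · exact hk
  exfalso
  rcases hrH with hr | ⟨c, hc⟩
  · have hr1 : r = 1 := by omega
    subst hr1
    simp at h2
    omega
  have hv : v = r * (k - 1) + 1 := by
    set x := r * (k - 1) with hx
    omega
  have h1' : b * k = (r * (k - 1) + 1) * r := by rw [← hv]; exact h1
  have hz : (b : ℤ) * k = ((r : ℤ) * ((k : ℤ) - 1) + 1) * r := by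
    have : ((k : ℤ) - 1) = ((k - 1 : ℕ) : ℤ) := by
      push_cast [Nat.cast_sub (by omega : 1 ≤ k)]; ring
    rw [this]; exact_mod_cast h1'
  have hka : (k : ℤ) = 4 * a := by exact_mod_cast ha
  have hrc : (r : ℤ) = 4 * c - 1 := by omega
  rw [hka, hrc] at hz
  have h4 := congrArg (fun z : ℤ => (z : ZMod 4)) hz
  push_cast at h4
  have h40 : (4 : ZMod 4) = 0 := rfl
  rw [h40] at h4
  ring_nf at h4
  revert h4
  decide
end

section
/- If there exists a Hadamard matrix of size u ≥ 1, then there exist Naimark-complementary real flat ETFs with parameters (d,n) = (u(2u−1), 4u²) and (u(2u+1), 4u²); in particular both are Hadamard ETFs (each is a submatrix of a 4u²×4u² real Hadamard matrix). -/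
/-!
Index the `4u²` coordinates by pairs `(c, d)` of vertices of `K_{2u}` and let `K = E ⊗ F` be the
Hadamard matrix of order `2u`. All rows used have the shape `(c, d) ↦ g c * K (π c) d` with `π` a
permutation and `g` a `±1` function, and two such rows are orthogonal as soon as `π` and `π'`
disagree everywhere. Attaching rows of `E` to the labelled edges of the round-robin matchings
(once with an orientation sign, once without) and adding the `2u` rows `(c, d) ↦ K a c * K c d`
therefore gives a `4u² × 4u²` Hadamard matrix. Its signed rows are eigenvectors for `2u`, the others
for `-2u`, of the symmetric `±1` matrix `R (p, q) = -K p.1 q.2 * K q.1 p.2`; together with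
`ΦᵀΦ + ΨᵀΨ = 4u² I` this forces `ΦᵀΦ = 2u² I + u R` and `ΨᵀΨ = 2u² I - u R`, so both frames are
equiangular.
-/

open Matrix Function
open scoped Kronecker

def IsSignMatrix {m n : Type*} (A : Matrix m n ℝ) : Prop := ∀ i j, A i j = 1 ∨ A i j = -1

theorem mul_eq_one_or_eq_neg_one {a b : ℝ} (ha : a = 1 ∨ a = -1) (hb : b = 1 ∨ b = -1) :
    a * b = 1 ∨ a * b = -1 := by
  rcases ha with rfl | rfl <;> rcases hb with rfl | rfl <;> norm_num

namespace IsSignMatrix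
variable {l m m₁ m₂ n o : Type*}

theorem submatrix {A : Matrix m n ℝ} (hA : IsSignMatrix A) (r : l → m) (c : o → n) :
    IsSignMatrix (A.submatrix r c) := fun i j => hA (r i) (c j)

theorem fromRows {A : Matrix m₁ n ℝ} {B : Matrix m₂ n ℝ} (hA : IsSignMatrix A)
    (hB : IsSignMatrix B) : IsSignMatrix (Matrix.fromRows A B) := by
  rintro (i | i) j
  exacts [hA i j, hB i j]

theorem kronecker {A : Matrix m n ℝ} {B : Matrix l o ℝ} (hA : IsSignMatrix A)
    (hB : IsSignMatrix B) : IsSignMatrix (A ⊗ₖ B) :=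
  fun _ _ => mul_eq_one_or_eq_neg_one (hA _ _) (hB _ _)

end IsSignMatrix

section Gram
variable {l₁ l₂ m m₁ m₂ n n' : Type*} [Fintype n] {c : ℝ}

theorem sum_mul_eq_ite_of_mul_transpose_eq [DecidableEq m] {A : Matrix m n ℝ}
    (hA : A * Aᵀ = c • 1) (i j : m) : ∑ k, A i k * A j k = if i = j then c else 0 := by
  simpa [mul_apply, one_apply] using congrFun (congrFun hA i) j

theorem fromRows_mul_transpose_fromRows [DecidableEq m₁] [DecidableEq m₂] {A : Matrix m₁ n ℝ}
    {B : Matrix m₂ n ℝ} (hA : A * Aᵀ = c • 1) (hB : B * Bᵀ = c • 1) (hAB : A * Bᵀ = 0) :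
    fromRows A B * (fromRows A B)ᵀ = c • 1 := by
  have hBA : B * Aᵀ = 0 := by
    rw [← transpose_transpose (B * Aᵀ), transpose_mul, transpose_transpose, hAB, transpose_zero]
  rw [transpose_fromRows, fromRows_mul_fromCols, hA, hB, hAB, hBA, ← fromBlocks_one,
    fromBlocks_smul, smul_zero, smul_zero]

theorem transpose_mul_self_eq_smul_one [Fintype m] [DecidableEq m] [DecidableEq n] (e : m ≃ n)
    (hc : c ≠ 0) {A : Matrix m n ℝ} (hA : A * Aᵀ = c • 1) : Aᵀ * A = c • 1 := by
  have h : A * (c⁻¹ • Aᵀ) = 1 := by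
    rw [Matrix.mul_smul, hA, smul_smul, inv_mul_cancel₀ hc, one_smul]
  rwa [mul_eq_one_comm_of_equiv e, Matrix.smul_mul, inv_smul_eq_iff₀ hc] at h

theorem transpose_mul_self_eq_of_eigen [Fintype m₁] [Fintype m₂] [DecidableEq n]
    {Φ : Matrix m₁ n ℝ} {Ψ : Matrix m₂ n ℝ} {R : Matrix n n ℝ} {a : ℝ}
    (hsum : Φᵀ * Φ + Ψᵀ * Ψ = c • 1) (hΦ : Φ * R = a • Φ) (hΨ : Ψ * R = -a • Ψ) :
    (2 * a) • (Φᵀ * Φ) = (a * c) • 1 + c • R := by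
  have hR : a • (Φᵀ * Φ) - a • (Ψᵀ * Ψ) = c • R := by
    simpa [Matrix.add_mul, Matrix.mul_assoc, hΦ, hΨ, sub_eq_add_neg] using congrArg (· * R) hsum
  linear_combination (norm := module) hR + a • hsum

theorem submatrix_mul_submatrix_transpose (A : Matrix m₁ n ℝ) (B : Matrix m₂ n ℝ)
    (e₁ : l₁ → m₁) (e₂ : l₂ → m₂) [Fintype n'] (e : n' ≃ n) :
    A.submatrix e₁ e * (B.submatrix e₂ e)ᵀ = (A * Bᵀ).submatrix e₁ e₂ := by
  rw [transpose_submatrix, submatrix_mul_equiv]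

theorem smul_one_submatrix_equiv [DecidableEq l₁] [DecidableEq m] (e : l₁ ≃ m) :
    (c • (1 : Matrix m m ℝ)).submatrix e e = c • 1 := by
  ext i j
  simp [one_apply]

theorem exists_hadamard_extending {I : Type*} [DecidableEq I] {N q p : ℕ} {M : Matrix I n ℝ}
    (hM : IsSignMatrix M) (hMM : M * Mᵀ = c • 1) (eI : Fin N ≃ I) (eJ : Fin q ≃ n)
    (g : Fin p → I) (hg : Injective g) :
    ∃ (Hb : Matrix (Fin N) (Fin q) ℝ) (f : Fin p → Fin N), IsSignMatrix Hb ∧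
      Hb * Hbᵀ = c • 1 ∧ Injective f ∧ ∀ i j, M (g i) (eJ j) = Hb (f i) j := by
  refine ⟨M.submatrix eI eJ, eI.symm ∘ g, hM.submatrix _ _, ?_, eI.symm.injective.comp hg,
    fun i j => by simp⟩
  rw [submatrix_mul_submatrix_transpose, hMM, smul_one_submatrix_equiv]

end Gram

section Equiangular
variable {m m' n n' : Type*} [Fintype m] [Fintype m']

def IsEquiangular (Φ : Matrix m n ℝ) : Prop :=
  ∃ γ : ℝ, ∀ j j', j ≠ j' → |∑ i, Φ i j * Φ i j'| = γ

theorem isEquiangular_of_smul_gram [Fintype n] [DecidableEq n] {Φ : Matrix m n ℝ}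
    {R : Matrix n n ℝ} (hR : IsSignMatrix R) {a b d : ℝ} (ha : a ≠ 0)
    (h : a • (Φᵀ * Φ) = b • 1 + d • R) : IsEquiangular Φ := by
  refine ⟨|d / a|, fun j j' hjj' => ?_⟩
  have hentry : a * ∑ i, Φ i j * Φ i j' = d * R j j' := by
    simpa [mul_apply, hjj'] using congrFun (congrFun h j) j'
  rw [← mul_div_cancel_left₀ (∑ i, Φ i j * Φ i j') ha, hentry, mul_div_right_comm, abs_mul]
  rcases hR j j' with hr | hr <;> simp [hr]

theorem IsEquiangular.submatrix {Φ : Matrix m n ℝ} (hΦ : IsEquiangular Φ) (e₁ : m' ≃ m)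
    (e₂ : n' ≃ n) : IsEquiangular (Φ.submatrix e₁ e₂) := by
  obtain ⟨γ, hγ⟩ := hΦ
  refine ⟨γ, fun j j' hjj' => ?_⟩
  rw [← hγ _ _ (e₂.injective.ne hjj'), ← e₁.sum_comp]
  rfl

end Equiangular

section Kronecker
variable {l m : Type*} [Fintype l] [Fintype m] [DecidableEq l] [DecidableEq m]

theorem kronecker_mul_transpose {A : Matrix l l ℝ} {B : Matrix m m ℝ} {a b : ℝ}
    (hA : A * Aᵀ = a • 1) (hB : B * Bᵀ = b • 1) : (A ⊗ₖ B) * (A ⊗ₖ B)ᵀ = (a * b) • 1 := by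
  rw [← kroneckerMap_transpose, ← mul_kronecker_mul, hA, hB, smul_kronecker, kronecker_smul,
    one_kronecker_one, smul_smul]

def hadamardTwo : Matrix (Fin 2) (Fin 2) ℝ := !![1, 1; 1, -1]

theorem isSignMatrix_hadamardTwo : IsSignMatrix hadamardTwo := by
  intro i j; fin_cases i <;> fin_cases j <;> simp [hadamardTwo]

theorem hadamardTwo_mul_transpose : hadamardTwo * hadamardTwoᵀ = (2 : ℝ) • 1 := by
  ext i j; fin_cases i <;> fin_cases j <;> norm_num [hadamardTwo, mul_apply, Fin.sum_univ_two]

theorem exists_hadamard_of_card_eq_two_mul {X : Type*} [Fintype X] [DecidableEq X] {n : ℕ}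
    (hX : Fintype.card X = 2 * n) {H : Matrix (Fin n) (Fin n) ℝ} (hH : IsSignMatrix H)
    (hHH : H * Hᵀ = (n : ℝ) • 1) :
    ∃ K : Matrix X X ℝ, IsSignMatrix K ∧ K * Kᵀ = (2 * (n : ℝ)) • 1 := by
  obtain ⟨e⟩ : Nonempty (X ≃ Fin n × Fin 2) := Fintype.card_eq.mp (by simpa [mul_comm] using hX)
  refine ⟨(H ⊗ₖ hadamardTwo).submatrix e e, (hH.kronecker isSignMatrix_hadamardTwo).submatrix _ _,
    ?_⟩
  rw [submatrix_mul_submatrix_transpose, kronecker_mul_transpose hHH hadamardTwo_mul_transpose,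
    smul_one_submatrix_equiv, mul_comm (n : ℝ)]

end Kronecker

section Rows
variable {X : Type*} (K : Matrix X X ℝ)

/-- As a matrix on `X`, this is `diag g * P_π * K`. -/
def rowOf (π : X → X) (g : X → ℝ) : X × X → ℝ := fun p => g p.1 * K (π p.1) p.2

/-- On vectors indexed by `X × X`, read as matrices `A`, right multiplication by this matrix is
`A ↦ -K Aᵀ K`. -/
def signatureMatrix : Matrix (X × X) (X × X) ℝ := of fun p q => -(K p.1 q.2 * K q.1 p.2)

def vertexRows : Matrix X (X × X) ℝ := of fun a => rowOf K id (K a)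

variable {K}

theorem IsSignMatrix.signatureMatrix (hK : IsSignMatrix K) :
    IsSignMatrix (signatureMatrix K) := fun p q => by
  rcases mul_eq_one_or_eq_neg_one (hK p.1 q.2) (hK q.1 p.2) with h | h <;>
    simp [_root_.signatureMatrix, h]

theorem isSignMatrix_vertexRows (hK : IsSignMatrix K) : IsSignMatrix (vertexRows K) :=
  fun _ _ => mul_eq_one_or_eq_neg_one (hK _ _) (hK _ _)

variable [Fintype X] [DecidableEq X] {m : ℝ} (hK : K * Kᵀ = m • 1)
include hK

theorem sum_rowOf_mul_rowOf (π π' : X → X) (g g' : X → ℝ) :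
    ∑ p, rowOf K π g p * rowOf K π' g' p =
      m * ∑ c, if π c = π' c then g c * g' c else 0 := by
  rw [Fintype.sum_prod_type, Finset.mul_sum]
  refine Finset.sum_congr rfl fun c _ => ?_
  calc ∑ d, rowOf K π g (c, d) * rowOf K π' g' (c, d)
      = g c * g' c * ∑ d, K (π c) d * K (π' c) d := by
        rw [Finset.mul_sum]; exact Finset.sum_congr rfl fun d _ => by simp only [rowOf]; ring
    _ = _ := by rw [sum_mul_eq_ite_of_mul_transpose_eq hK]; split_ifs <;> ring

theorem sum_rowOf_mul_signatureMatrix {π : X → X} (hπ : Involutive π) {g : X → ℝ} {ε : ℝ}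
    (hg : ∀ c, g (π c) = ε * g c) (q : X × X) :
    ∑ p, rowOf K π g p * signatureMatrix K p q = -(m * ε) * rowOf K π g q := by
  rw [Fintype.sum_prod_type]
  calc ∑ c, ∑ d, rowOf K π g (c, d) * signatureMatrix K (c, d) q
      = ∑ c, -(g c * K c q.2) * ∑ d, K (π c) d * K q.1 d := by
        refine Finset.sum_congr rfl fun c _ => ?_
        rw [Finset.mul_sum]
        exact Finset.sum_congr rfl fun d _ => by simp only [rowOf, signatureMatrix, of_apply]; ring
    _ = ∑ c, if c = π q.1 then -(m * g c * K c q.2) else 0 := by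
        simp only [sum_mul_eq_ite_of_mul_transpose_eq hK, hπ.eq_iff, mul_ite, mul_zero]
        exact Finset.sum_congr rfl fun c _ => by split_ifs <;> ring
    _ = _ := by rw [Finset.sum_ite_eq' Finset.univ, if_pos (Finset.mem_univ _), rowOf, hg]; ring

theorem vertexRows_mul_transpose : vertexRows K * (vertexRows K)ᵀ = (m * m) • 1 := by
  ext a a'
  by_cases haa' : a = a' <;>
    simp [mul_apply, vertexRows, sum_rowOf_mul_rowOf hK, sum_mul_eq_ite_of_mul_transpose_eq hK,
      haa', one_apply]

theorem vertexRows_mul_signatureMatrix :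
    vertexRows K * signatureMatrix K = (-m) • vertexRows K := by
  ext a q
  simp only [mul_apply, Matrix.smul_apply, vertexRows, of_apply, smul_eq_mul]
  simpa using sum_rowOf_mul_signatureMatrix hK (π := id) (g := K a) (ε := 1) (fun _ => rfl)
    (by simp) q

end Rows

/-- A one-factorization of the complete graph on `X` whose matchings are indexed by `S`: the
`l`-th edge of the perfect matching `partner s` joins `label s (l, false)` and
`label s (l, true)`, and distinct matchings share no edge. -/
structure LabelledOneFactorization (S L X : Type*) where
  label : S → L × Bool ≃ X
  partner : S → X → X
  partner_label (s : S) (l : L) (b : Bool) : partner s (label s (l, b)) = label s (l, !b)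
  partner_injective (x : X) : Injective fun s => partner s x

namespace LabelledOneFactorization
variable {S L X : Type*} (F : LabelledOneFactorization S L X)

theorem partner_ne (s : S) (x : X) : F.partner s x ≠ x := by
  obtain ⟨⟨l, b⟩, rfl⟩ := (F.label s).surjective x
  simp [F.partner_label]

theorem partner_involutive (s : S) : Involutive (F.partner s) := by
  intro x
  obtain ⟨⟨l, b⟩, rfl⟩ := (F.label s).surjective x
  simp [F.partner_label]

variable (K : Matrix X X ℝ) (E : Matrix L L ℝ)

def matchingRows (τ : Bool → ℝ) : Matrix (S × L) (X × X) ℝ :=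
  of fun i => rowOf K (F.partner i.1) fun c =>
    τ ((F.label i.1).symm c).2 * E i.2 ((F.label i.1).symm c).1

def frame : Matrix (S × L) (X × X) ℝ := F.matchingRows K E fun b => if b then -1 else 1

def complement : Matrix ((S × L) ⊕ X) (X × X) ℝ :=
  fromRows (F.matchingRows K E 1) (vertexRows K)

variable {F K E}

theorem isSignMatrix_matchingRows (hK : IsSignMatrix K) (hE : IsSignMatrix E) {τ : Bool → ℝ}
    (hτ : ∀ b, τ b = 1 ∨ τ b = -1) : IsSignMatrix (F.matchingRows K E τ) := fun _ _ =>
  mul_eq_one_or_eq_neg_one (mul_eq_one_or_eq_neg_one (hτ _) (hE _ _)) (hK _ _)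

theorem isSignMatrix_frame (hK : IsSignMatrix K) (hE : IsSignMatrix E) :
    IsSignMatrix (F.frame K E) :=
  F.isSignMatrix_matchingRows hK hE fun b => by cases b <;> simp

theorem isSignMatrix_complement (hK : IsSignMatrix K) (hE : IsSignMatrix E) :
    IsSignMatrix (F.complement K E) :=
  (F.isSignMatrix_matchingRows hK hE fun _ => Or.inl rfl).fromRows (isSignMatrix_vertexRows hK)

variable [Fintype X] [DecidableEq X] {m w : ℝ}

theorem matchingRows_mul_transpose_vertexRows (hK : K * Kᵀ = m • 1) (τ : Bool → ℝ) :
    F.matchingRows K E τ * (vertexRows K)ᵀ = 0 := by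
  ext i a
  simp [mul_apply, matchingRows, vertexRows, sum_rowOf_mul_rowOf hK, F.partner_ne]

theorem matchingRows_mul_signatureMatrix (hK : K * Kᵀ = m • 1) {τ : Bool → ℝ} {ε : ℝ}
    (hτ : ∀ b, τ (!b) = ε * τ b) :
    F.matchingRows K E τ * signatureMatrix K = (-(m * ε)) • F.matchingRows K E τ := by
  ext i q
  simp only [mul_apply, Matrix.smul_apply, matchingRows, of_apply, smul_eq_mul]
  refine sum_rowOf_mul_signatureMatrix hK (F.partner_involutive i.1) (fun c => ?_) q
  obtain ⟨⟨l, b⟩, rfl⟩ := (F.label i.1).surjective c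
  simp only [Equiv.symm_apply_apply, F.partner_label, hτ, mul_assoc]

theorem frame_mul_signatureMatrix (hK : K * Kᵀ = (2 * w) • 1) :
    F.frame K E * signatureMatrix K = (2 * w) • F.frame K E := by
  rw [frame, F.matchingRows_mul_signatureMatrix hK (ε := -1) fun b => by cases b <;> simp,
    mul_neg_one, neg_neg]

theorem complement_mul_signatureMatrix (hK : K * Kᵀ = (2 * w) • 1) :
    F.complement K E * signatureMatrix K = -(2 * w) • F.complement K E := by
  rw [complement, fromRows_mul, F.matchingRows_mul_signatureMatrix hK (ε := 1) fun _ => by simp,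
    vertexRows_mul_signatureMatrix hK]
  ext (i | i) q <;> simp

variable [Fintype L] [DecidableEq S] [DecidableEq L]

theorem matchingRows_mul_transpose (hK : K * Kᵀ = m • 1) (hE : E * Eᵀ = w • 1)
    (τ τ' : Bool → ℝ) : F.matchingRows K E τ * (F.matchingRows K E τ')ᵀ =
      (m * w * (τ false * τ' false + τ true * τ' true)) • 1 := by
  ext ⟨s, e⟩ ⟨t, e'⟩
  simp only [mul_apply, transpose_apply, matchingRows, of_apply, sum_rowOf_mul_rowOf hK]
  by_cases hst : s = t
  · subst hst
    rw [← (F.label s).sum_comp]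
    simp only [Equiv.symm_apply_apply, if_true, Fintype.sum_prod_type, Fintype.sum_bool]
    have hsummand : ∀ x,
        τ true * E e x * (τ' true * E e' x) + τ false * E e x * (τ' false * E e' x) =
          (τ false * τ' false + τ true * τ' true) * (E e x * E e' x) := fun x => by ring
    simp only [hsummand, ← Finset.mul_sum, sum_mul_eq_ite_of_mul_transpose_eq hE,
      Matrix.smul_apply, one_apply, Prod.mk.injEq, true_and, smul_eq_mul]
    split_ifs <;> ring
  · simp [(F.partner_injective _).ne hst, hst]

variable (hK : K * Kᵀ = (2 * w) • 1) (hE : E * Eᵀ = w • 1)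
include hK hE

theorem frame_mul_transpose : F.frame K E * (F.frame K E)ᵀ = (4 * w ^ 2) • 1 := by
  rw [frame, F.matchingRows_mul_transpose hK hE]
  congr 1
  simp only [Bool.false_eq_true, if_true, if_false]
  ring

theorem complement_mul_transpose :
    F.complement K E * (F.complement K E)ᵀ = (4 * w ^ 2) • 1 := by
  refine fromRows_mul_transpose_fromRows ?_ ?_ (F.matchingRows_mul_transpose_vertexRows hK 1)
  · rw [F.matchingRows_mul_transpose hK hE]
    congr 1
    simp only [Pi.one_apply]
    ring
  · rw [vertexRows_mul_transpose hK]
    congr 1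
    ring

theorem frame_mul_transpose_complement : F.frame K E * (F.complement K E)ᵀ = 0 := by
  rw [complement, transpose_fromRows, mul_fromCols, frame, F.matchingRows_mul_transpose hK hE,
    F.matchingRows_mul_transpose_vertexRows hK]
  norm_num

theorem fromRows_frame_complement_mul_transpose :
    fromRows (F.frame K E) (F.complement K E) * (fromRows (F.frame K E) (F.complement K E))ᵀ =
      (4 * w ^ 2) • 1 :=
  fromRows_mul_transpose_fromRows (F.frame_mul_transpose hK hE) (F.complement_mul_transpose hK hE)
    (F.frame_mul_transpose_complement hK hE)

theorem isEquiangular_frame_and_complement [Fintype S] (hKs : IsSignMatrix K)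
    (e : (S × L) ⊕ ((S × L) ⊕ X) ≃ X × X) (hw : w ≠ 0) :
    IsEquiangular (F.frame K E) ∧ IsEquiangular (F.complement K E) := by
  have hsum := transpose_mul_self_eq_smul_one e (by positivity)
    (F.fromRows_frame_complement_mul_transpose hK hE)
  rw [transpose_fromRows, fromCols_mul_fromRows] at hsum
  have hΦ := F.frame_mul_signatureMatrix (E := E) hK
  have hΨ := F.complement_mul_signatureMatrix (E := E) hK
  constructor
  · exact isEquiangular_of_smul_gram hKs.signatureMatrix (by simpa using hw)
      (transpose_mul_self_eq_of_eigen hsum hΦ hΨ)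
  · rw [← neg_neg (2 * w)] at hΦ
    exact isEquiangular_of_smul_gram hKs.signatureMatrix (by simpa using hw)
      (transpose_mul_self_eq_of_eigen ((add_comm _ _).trans hsum) hΨ hΦ)

end LabelledOneFactorization

theorem card_kirkman_indices {S L X : Type*} [Fintype S] [Fintype L] [Fintype X] {u : ℕ}
    (hS : Fintype.card S = 2 * u - 1) (hL : Fintype.card L = u) (hX : Fintype.card X = 2 * u) :
    Fintype.card (S × L) = u * (2 * u - 1) ∧ Fintype.card ((S × L) ⊕ X) = u * (2 * u + 1) ∧
      Fintype.card (X × X) = 4 * u ^ 2 ∧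
      Fintype.card ((S × L) ⊕ ((S × L) ⊕ X)) = 4 * u ^ 2 := by
  simp only [Fintype.card_prod, Fintype.card_sum, hS, hL, hX]
  rcases u with _ | u
  · simp
  · rw [show 2 * (u + 1) - 1 = 2 * u + 1 by omega]
    refine ⟨by ring, by ring, by ring, by ring⟩

section RoundRobin
variable (k : ℕ)

/-- Round `s` of the round-robin schedule on `ZMod (2k+1) ∪ {∞}`, with `none` playing `∞`. -/
def roundRobinPartner (s : ZMod (2 * k + 1)) :
    Option (ZMod (2 * k + 1)) → Option (ZMod (2 * k + 1))
  | none => some s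
  | some x => if x = s then none else some (2 * s - x)

def roundRobinLabel (s : ZMod (2 * k + 1)) : Fin (k + 1) × Bool → Option (ZMod (2 * k + 1))
  | (⟨0, _⟩, false) => none
  | (⟨0, _⟩, true) => some s
  | (⟨i + 1, _⟩, false) => some (s + (i + 1 : ℕ))
  | (⟨i + 1, _⟩, true) => some (s - (i + 1 : ℕ))

variable {k}

theorem ZMod.natCast_ne_zero_of_lt {i : ℕ} (hi₀ : i ≠ 0) (hi : i < 2 * k + 1) :
    (i : ZMod (2 * k + 1)) ≠ 0 := by
  rw [Ne, ZMod.natCast_eq_zero_iff]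
  exact fun h => hi₀ (Nat.eq_zero_of_dvd_of_lt h hi)

theorem ZMod.eq_of_two_mul_eq_two_mul {s t : ZMod (2 * k + 1)} (h : 2 * s = 2 * t) : s = t := by
  have h0 : ((2 * k + 1 : ℕ) : ZMod (2 * k + 1)) = 0 := ZMod.natCast_self _
  push_cast at h0
  -- `(k + 1) * 2 = 1` in `ZMod (2k+1)`
  linear_combination (k + 1 : ZMod (2 * k + 1)) * h - (s - t) * h0

theorem ZMod.exists_natCast_eq_or_eq_neg (δ : ZMod (2 * k + 1)) :
    ∃ i ≤ k, (i : ZMod (2 * k + 1)) = δ ∨ (i : ZMod (2 * k + 1)) = -δ := by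
  by_cases hδ : δ.val ≤ k
  · exact ⟨δ.val, hδ, Or.inl (ZMod.natCast_zmod_val δ)⟩
  · have hδ0 : δ ≠ 0 := by rintro rfl; simp at hδ
    refine ⟨(-δ).val, ?_, Or.inr (ZMod.natCast_zmod_val _)⟩
    have := ZMod.val_lt δ
    rw [ZMod.neg_val, if_neg hδ0]
    omega

theorem roundRobinLabel_surjective (s : ZMod (2 * k + 1)) :
    Surjective (roundRobinLabel k s) := by
  rintro (_ | x)
  · exact ⟨(⟨0, k.succ_pos⟩, false), rfl⟩
  by_cases hxs : x = s
  · exact ⟨(⟨0, k.succ_pos⟩, true), by rw [hxs]; rfl⟩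
  obtain ⟨_ | i, hi, h⟩ := ZMod.exists_natCast_eq_or_eq_neg (x - s)
  · simp only [Nat.cast_zero, eq_comm (a := (0 : ZMod _)), neg_eq_zero, sub_eq_zero,
      or_self] at h
    exact absurd h hxs
  rcases h with h | h
  · exact ⟨(⟨i + 1, by omega⟩, false), by simp [roundRobinLabel, h]⟩
  · exact ⟨(⟨i + 1, by omega⟩, true), by simp [roundRobinLabel, h]⟩

theorem roundRobinLabel_bijective (s : ZMod (2 * k + 1)) : Bijective (roundRobinLabel k s) := by
  rw [Fintype.bijective_iff_surjective_and_card]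
  refine ⟨roundRobinLabel_surjective s, ?_⟩
  simp only [Fintype.card_prod, Fintype.card_fin, Fintype.card_bool, Fintype.card_option,
    ZMod.card]
  ring

theorem roundRobinPartner_label (s : ZMod (2 * k + 1)) (l : Fin (k + 1)) (b : Bool) :
    roundRobinPartner k s (roundRobinLabel k s (l, b)) = roundRobinLabel k s (l, !b) := by
  obtain ⟨_ | i, hi⟩ := l
  · cases b
    · rfl
    · exact if_pos rfl
  have hi0 := ZMod.natCast_ne_zero_of_lt (k := k) (Nat.succ_ne_zero i) (by omega)
  cases b
  · have hx : s + ((i + 1 : ℕ) : ZMod (2 * k + 1)) ≠ s := by simpa using hi0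
    simp only [roundRobinLabel, roundRobinPartner, if_neg hx, Bool.not_false]
    congr 1; ring
  · have hx : s - ((i + 1 : ℕ) : ZMod (2 * k + 1)) ≠ s := by simpa using hi0
    simp only [roundRobinLabel, roundRobinPartner, if_neg hx, Bool.not_true]
    congr 1; ring

theorem roundRobinPartner_injective (x : Option (ZMod (2 * k + 1))) :
    Injective fun s => roundRobinPartner k s x := by
  intro s t hst
  rcases x with _ | x
  · simpa [roundRobinPartner] using hst
  simp only [roundRobinPartner] at hst
  split_ifs at hst with hxs hxt hxt
  · exact hxs.symm.trans hxt
  · exact ZMod.eq_of_two_mul_eq_two_mul (by simpa using hst)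

variable (k) in
noncomputable def roundRobin :
    LabelledOneFactorization (ZMod (2 * k + 1)) (Fin (k + 1)) (Option (ZMod (2 * k + 1))) where
  label s := Equiv.ofBijective _ (roundRobinLabel_bijective s)
  partner := roundRobinPartner k
  partner_label := roundRobinPartner_label
  partner_injective := roundRobinPartner_injective

end RoundRobin

/-- If there exists a Hadamard matrix of size `u ≥ 1`, then there exist Naimark-complementary
real flat ETFs with parameters `(d,n) = (u(2u−1), 4u²)` and `(u(2u+1), 4u²)`; in particular
both are Hadamard ETFs, i.e. each occurs as rows of a `4u² × 4u²` real Hadamard matrix. -/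
theorem kirkman_hadamard_etf (u : ℕ) (hu : 1 ≤ u)
    (H : Matrix (Fin u) (Fin u) ℝ)
    (hH1 : ∀ i j, H i j = 1 ∨ H i j = -1)
    (hH2 : H * H.transpose = (u : ℝ) • 1) :
    ∃ (Φ : Matrix (Fin (u * (2 * u - 1))) (Fin (4 * u ^ 2)) ℝ)
      (Ψ : Matrix (Fin (u * (2 * u + 1))) (Fin (4 * u ^ 2)) ℝ),
      (∀ i j, Φ i j = 1 ∨ Φ i j = -1) ∧
      (∀ i j, Ψ i j = 1 ∨ Ψ i j = -1) ∧
      Φ * Φ.transpose = ((4 * u ^ 2 : ℕ) : ℝ) • 1 ∧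
      Ψ * Ψ.transpose = ((4 * u ^ 2 : ℕ) : ℝ) • 1 ∧
      Φ * Ψ.transpose = 0 ∧
      (∃ γ : ℝ, ∀ j j', j ≠ j' → |∑ i, Φ i j * Φ i j'| = γ) ∧
      (∃ γ : ℝ, ∀ j j', j ≠ j' → |∑ i, Ψ i j * Ψ i j'| = γ) ∧
      (∃ (Hb : Matrix (Fin (4 * u ^ 2)) (Fin (4 * u ^ 2)) ℝ)
          (f : Fin (u * (2 * u - 1)) → Fin (4 * u ^ 2)),
        (∀ i j, Hb i j = 1 ∨ Hb i j = -1) ∧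
        Hb * Hb.transpose = ((4 * u ^ 2 : ℕ) : ℝ) • 1 ∧
        Function.Injective f ∧ (∀ i j, Φ i j = Hb (f i) j)) ∧
      (∃ (Hb : Matrix (Fin (4 * u ^ 2)) (Fin (4 * u ^ 2)) ℝ)
          (f : Fin (u * (2 * u + 1)) → Fin (4 * u ^ 2)),
        (∀ i j, Hb i j = 1 ∨ Hb i j = -1) ∧
        Hb * Hb.transpose = ((4 * u ^ 2 : ℕ) : ℝ) • 1 ∧
        Function.Injective f ∧ (∀ i j, Ψ i j = Hb (f i) j)) := by
  obtain ⟨k, rfl⟩ : ∃ k, u = k + 1 := ⟨u - 1, by omega⟩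
  let F := roundRobin k
  have hX : Fintype.card (Option (ZMod (2 * k + 1))) = 2 * (k + 1) := by
    rw [Fintype.card_option, ZMod.card]; ring
  obtain ⟨K, hKs, hK⟩ := exists_hadamard_of_card_eq_two_mul hX hH1 hH2
  obtain ⟨h₁, h₂, hJ, hI⟩ :=
    card_kirkman_indices (S := ZMod (2 * k + 1)) (by rw [ZMod.card]; omega) (Fintype.card_fin _) hX
  let e₁ := (Fintype.equivFinOfCardEq h₁).symm
  let e₂ := (Fintype.equivFinOfCardEq h₂).symm
  let eJ := (Fintype.equivFinOfCardEq hJ).symm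
  let eI := (Fintype.equivFinOfCardEq hI).symm
  have hM := (F.isSignMatrix_frame hKs hH1).fromRows (F.isSignMatrix_complement hKs hH1)
  have hMM := F.fromRows_frame_complement_mul_transpose hK hH2
  obtain ⟨hΦ, hΨ⟩ :=
    F.isEquiangular_frame_and_complement hK hH2 hKs (eI.symm.trans eJ) (by positivity)
  rw [show ((4 * (k + 1) ^ 2 : ℕ) : ℝ) = 4 * ((k + 1 : ℕ) : ℝ) ^ 2 by push_cast; ring]
  refine ⟨(F.frame K H).submatrix e₁ eJ, (F.complement K H).submatrix e₂ eJ,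
    (F.isSignMatrix_frame hKs hH1).submatrix _ _, (F.isSignMatrix_complement hKs hH1).submatrix _ _,
    ?_, ?_, ?_, hΦ.submatrix e₁ eJ, hΨ.submatrix e₂ eJ,
    exists_hadamard_extending hM hMM eI eJ _ (Sum.inl_injective.comp e₁.injective),
    exists_hadamard_extending hM hMM eI eJ _ (Sum.inr_injective.comp e₂.injective)⟩
  · rw [submatrix_mul_submatrix_transpose, F.frame_mul_transpose hK hH2, smul_one_submatrix_equiv]
  · rw [submatrix_mul_submatrix_transpose, F.complement_mul_transpose hK hH2,
      smul_one_submatrix_equiv]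
  · rw [submatrix_mul_submatrix_transpose, F.frame_mul_transpose_complement hK hH2,
      submatrix_zero]
    rfl
end

section
/- A real flat ETF is Hadamard if and only if it has a real flat Naimark complement; a complex flat ETF is complex Hadamard if and only if it has a flat Naimark complement. -/
/-!
Stacking `Φ` on top of `Φ̃` gives a square matrix `M` whose Gram matrix `M M*` is the block
matrix with blocks `Φ Φ*`, `Φ Φ̃*`, `Φ̃ Φ*`, `Φ̃ Φ̃*`; so `M M* = n • 1` says exactly that `Φ̃` is a
Naimark complement of `Φ`. Conversely, the rows of a Hadamard matrix not used by `Φ` form such a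
`Φ̃`. Reordering rows does not affect `M M* = n • 1`, and entries are only copied, so flatness
passes between `M` and `Φ, Φ̃` in both directions.
-/

open Matrix Function

lemma Fin.exists_sumEquiv_inl_eq {d n : ℕ} {f : Fin d → Fin n} (hf : Injective f) :
    ∃ e : Fin d ⊕ Fin (n - d) ≃ Fin n, ∀ i, e (Sum.inl i) = f i := by
  classical
  have hcard : Fintype.card {x // x ∉ Set.range f} = n - d := by
    rw [Fintype.card_subtype_compl, Set.card_range_of_injective hf]
    simp
  exact ⟨(Equiv.sumCongr (Equiv.ofInjective f hf) (Fintype.equivFinOfCardEq hcard).symm).trans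
    (Equiv.sumCompl _), fun _ => rfl⟩

namespace Matrix

variable {𝕜 : Type*} [Semiring 𝕜] [StarRing 𝕜] {l m m₁ m₂ n : Type*} [Fintype n]

lemma submatrix_mul_conjTranspose_submatrix (M : Matrix m n 𝕜) (r : l → m) :
    M.submatrix r id * (M.submatrix r id)ᴴ = (M * Mᴴ).submatrix r r := by
  rw [conjTranspose_submatrix, submatrix_mul _ _ _ _ _ bijective_id]

lemma submatrix_mul_conjTranspose_eq_smul_one_iff [DecidableEq l] [DecidableEq m]
    (M : Matrix m n 𝕜) (e : l ≃ m) (c : 𝕜) :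
    M.submatrix e id * (M.submatrix e id)ᴴ = c • 1 ↔ M * Mᴴ = c • 1 := by
  rw [submatrix_mul_conjTranspose_submatrix, ← submatrix_one_equiv e]
  exact (reindex e.symm e.symm).injective.eq_iff (a := M * Mᴴ) (b := c • 1)

lemma fromRows_mul_conjTranspose_eq_smul_one_iff [DecidableEq m₁] [DecidableEq m₂]
    (A : Matrix m₁ n 𝕜) (B : Matrix m₂ n 𝕜) (c : 𝕜) :
    fromRows A B * (fromRows A B)ᴴ = c • 1 ↔
      A * Aᴴ = c • 1 ∧ A * Bᴴ = 0 ∧ B * Bᴴ = c • 1 := by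
  rw [conjTranspose_fromRows_eq_fromCols_conjTranspose, fromRows_mul_fromCols, ← fromBlocks_one,
    fromBlocks_smul, smul_zero, smul_zero, fromBlocks_inj]
  have hBA : B * Aᴴ = 0 ↔ A * Bᴴ = 0 := by
    rw [← conjTranspose_inj, conjTranspose_mul, conjTranspose_conjTranspose, conjTranspose_zero]
  rw [hBA]
  tauto

lemma exists_flat_extension_iff_exists_flat_complement (P : 𝕜 → Prop) {d n : ℕ} {c : 𝕜}
    (hdn : d ≤ n) {Φ : Matrix (Fin d) (Fin n) 𝕜} (hΦP : ∀ i j, P (Φ i j))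
    (hΦ : Φ * Φᴴ = c • 1) :
    (∃ (H : Matrix (Fin n) (Fin n) 𝕜) (f : Fin d → Fin n),
        (∀ i j, P (H i j)) ∧ H * Hᴴ = c • 1 ∧ Injective f ∧ ∀ i j, Φ i j = H (f i) j) ↔
      ∃ Φt : Matrix (Fin (n - d)) (Fin n) 𝕜,
        (∀ i j, P (Φt i j)) ∧ Φ * Φtᴴ = 0 ∧ Φt * Φtᴴ = c • 1 := by
  constructor
  · rintro ⟨H, f, hHP, hH, hf, hΦH⟩
    obtain ⟨e, he⟩ := Fin.exists_sumEquiv_inl_eq hf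
    set Φt := H.submatrix (e ∘ Sum.inr) id
    have hsplit : H.submatrix e id = fromRows Φ Φt := by
      ext (i | i) j <;> simp [Φt, he, hΦH]
    have hgram := (submatrix_mul_conjTranspose_eq_smul_one_iff H e c).2 hH
    rw [hsplit, fromRows_mul_conjTranspose_eq_smul_one_iff] at hgram
    exact ⟨Φt, fun _ _ => hHP _ _, hgram.2⟩
  · rintro ⟨Φt, hΦtP, horth, hΦt⟩
    let e : Fin d ⊕ Fin (n - d) ≃ Fin n := finSumFinEquiv.trans (finCongr (by omega))
    have hMP : ∀ k j, P (fromRows Φ Φt k j) := by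
      rintro (i | i) j
      exacts [hΦP i j, hΦtP i j]
    refine ⟨(fromRows Φ Φt).submatrix e.symm id, e ∘ Sum.inl, fun _ _ => hMP _ _, ?_,
      e.injective.comp Sum.inl_injective, fun i j => by simp⟩
    exact (submatrix_mul_conjTranspose_eq_smul_one_iff _ e.symm c).2
      ((fromRows_mul_conjTranspose_eq_smul_one_iff Φ Φt c).2 ⟨hΦ, horth, hΦt⟩)

end Matrix

/-- A real flat ETF is Hadamard iff it has a real flat Naimark complement, and a complex flat
ETF is complex Hadamard iff it has a flat Naimark complement.  Here a `d × n` flat ETF `Φ`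
(entries of modulus one, `Φ Φ* = n • 1`, equiangular) is (complex) Hadamard when it occurs as
`d` rows of an `n × n` (complex) Hadamard matrix, and a Naimark complement is an
`(n−d) × n` matrix `Φ̃` with `Φ Φ̃* = 0` and `Φ̃ Φ̃* = n • 1`. -/
theorem flat_etf_hadamard_iff_flat_naimark :
    (∀ (d n : ℕ), 0 < d → d < n →
      ∀ Φ : Matrix (Fin d) (Fin n) ℝ,
        (∀ i j, Φ i j = 1 ∨ Φ i j = -1) →
        Φ * Φ.transpose = (n : ℝ) • 1 →
        (∃ γ : ℝ, ∀ j j', j ≠ j' → |∑ i, Φ i j * Φ i j'| = γ) →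
        ((∃ (H : Matrix (Fin n) (Fin n) ℝ) (f : Fin d → Fin n),
            (∀ i j, H i j = 1 ∨ H i j = -1) ∧ H * H.transpose = (n : ℝ) • 1 ∧
            Function.Injective f ∧ (∀ i j, Φ i j = H (f i) j)) ↔
          (∃ Φt : Matrix (Fin (n - d)) (Fin n) ℝ,
            (∀ i j, Φt i j = 1 ∨ Φt i j = -1) ∧
            Φ * Φt.transpose = 0 ∧ Φt * Φt.transpose = (n : ℝ) • 1))) ∧
    (∀ (d n : ℕ), 0 < d → d < n →
      ∀ Φ : Matrix (Fin d) (Fin n) ℂ,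
        (∀ i j, ‖Φ i j‖ = 1) →
        Φ * Φ.conjTranspose = (n : ℂ) • 1 →
        (∃ γ : ℝ, ∀ j j', j ≠ j' → ‖∑ i, (starRingEnd ℂ) (Φ i j) * Φ i j'‖ = γ) →
        ((∃ (H : Matrix (Fin n) (Fin n) ℂ) (f : Fin d → Fin n),
            (∀ i j, ‖H i j‖ = 1) ∧ H * H.conjTranspose = (n : ℂ) • 1 ∧
            Function.Injective f ∧ (∀ i j, Φ i j = H (f i) j)) ↔
          (∃ Φt : Matrix (Fin (n - d)) (Fin n) ℂ,
            (∀ i j, ‖Φt i j‖ = 1) ∧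
            Φ * Φt.conjTranspose = 0 ∧ Φt * Φt.conjTranspose = (n : ℂ) • 1))) := by
  constructor
  · intro d n _ hdn Φ hflat hΦ _
    simpa only [conjTranspose_eq_transpose_of_trivial] using
      exists_flat_extension_iff_exists_flat_complement (fun x : ℝ => x = 1 ∨ x = -1) hdn.le hflat
        (by simpa only [conjTranspose_eq_transpose_of_trivial] using hΦ)
  · intro d n _ hdn Φ hflat hΦ _
    exact exists_flat_extension_iff_exists_flat_complement (fun x : ℂ => ‖x‖ = 1) hdn.le hflat hΦ
end

section
/- Let X be a {0,1}-valued b×v matrix with b > v > 1 and Φ = [1 | δJ + εX^T] for real δ, ε. There is a choice of δ, ε such that the b+1 columns of Φ form an ETF for R^v with ⟨φ_1,φ_j⟩ > 0 for all j if and only if X is the incidence matrix of a QSD(v,k,λ,r,b,x,y) with 0 < k < v and parameters w = sqrt(v(b+1−v)/b), r = bk/v, λ = r(k−1)/(v−1), x = k − (v+w)(r−λ)/(b+1), y = k − (v−w)(r−λ)/(b+1). -/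
/-!
Let `G = ΦᵀΦ` be the Gram matrix of the columns. Tightness `ΦΦᵀ = αI` gives `G² = αG`; the trace
forces `α = b + 1`, and the `(0,0)` entry of `G² = αG` is the Welch equality `bγ² = v(b + 1 - v)`,
so `γ = w`. As `⟨φ₁, φ_{a+1}⟩ = vδ + ε|B_a| = w` for every block, all blocks have the same size `k`.
Since `φ₁ = 𝟙`, `Φᵀ𝟙` is the first row of `G`, and `ΦΦᵀ𝟙 = (b + 1)𝟙` makes the replication numbers
constant; the off-diagonal entries of `ΦΦᵀ` then make the pair counts constant, and the usual
double count gives `λ(v - 1) = r(k - 1)`. Between blocks `G = v - ε²(k - |B_a ∩ B_c|) = ±w`, which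
yields exactly the intersection numbers `x` and `y`. If only one sign `σ` occurred, `e₀ - σe₁` would
be an eigenvector of `G` with eigenvalue `v - σw ∉ {0, b + 1}`. Conversely, with
`ε = √((b + 1)/(r - λ))` and `δ = (w - εk)/v` every step can be reversed.
-/

open Finset Matrix

section Frame
variable {m n : Type*}

theorem gram_mul_gram_of_tight [Fintype m] [Fintype n] [DecidableEq n] {Φ : Matrix n m ℝ} {α : ℝ}
    (h : Φ * Φᵀ = α • 1) : Φᵀ * Φ * (Φᵀ * Φ) = α • (Φᵀ * Φ) := by
  rw [Matrix.mul_assoc, ← Matrix.mul_assoc Φ, h, Matrix.smul_mul, Matrix.one_mul,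
    Matrix.mul_smul]

theorem card_mul_eq_of_tight [Fintype m] [Fintype n] [DecidableEq n] {Φ : Matrix n m ℝ} {α c : ℝ}
    (h : Φ * Φᵀ = α • 1) (hc : ∀ j, (Φᵀ * Φ) j j = c) :
    Fintype.card n * α = Fintype.card m * c := by
  have htr := congrArg trace h
  rw [trace_mul_comm, trace_smul, trace_one] at htr
  simp only [trace, Matrix.diag, hc, sum_const, card_univ, nsmul_eq_mul, smul_eq_mul] at htr
  linarith

theorem sum_sq_gram_row [Fintype m] {G : Matrix m m ℝ} {α : ℝ} (hG : G * G = α • G) (hsymm : Gᵀ = G)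
    (j : m) : ∑ l, G j l ^ 2 = α * G j j := by
  have h := congrFun (congrFun hG j) j
  rw [mul_apply, Matrix.smul_apply, smul_eq_mul] at h
  rw [← h]
  refine sum_congr rfl fun l _ => ?_
  rw [sq, ← transpose_apply G j l, hsymm]

theorem welch_of_gram [Fintype m] [DecidableEq m] {G : Matrix m m ℝ} {α γ : ℝ} (hG : G * G = α • G)
    (hsymm : Gᵀ = G) (j : m) (hγ : ∀ l, l ≠ j → |G j l| = γ) :
    G j j ^ 2 + (Fintype.card m - 1) * γ ^ 2 = α * G j j := by
  rw [← sum_sq_gram_row hG hsymm j, ← add_sum_erase _ _ (mem_univ j),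
    sum_congr rfl fun l hl => by rw [← sq_abs, hγ l (ne_of_mem_erase hl)], sum_const,
    card_erase_of_mem (mem_univ j), card_univ, nsmul_eq_mul,
    Nat.cast_sub (Fintype.card_pos_iff.mpr ⟨j⟩), Nat.cast_one]

theorem welch_of_tight [Fintype m] [Fintype n] [DecidableEq m] [DecidableEq n]
    {Φ : Matrix n m ℝ} {α c γ : ℝ} (htight : Φ * Φᵀ = α • 1) (hnorm : ∀ j, (Φᵀ * Φ) j j = c)
    (hγ : ∀ j j', j ≠ j' → |(Φᵀ * Φ) j j'| = γ) (j : m) :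
    (Fintype.card m - 1) * γ ^ 2 = c * (α - c) := by
  have h := welch_of_gram (gram_mul_gram_of_tight htight) (by simp) j fun l hl => hγ j l hl.symm
  rw [hnorm] at h
  linarith

theorem mul_self_eq_of_mulVec_eq_smul [Fintype m] {G : Matrix m m ℝ} {α μ : ℝ} (hG : G * G = α • G)
    {u : m → ℝ} (hu : u ≠ 0) (h : G *ᵥ u = μ • u) : μ * μ = α * μ := by
  have hu2 := congrArg (· *ᵥ u) hG
  simp only [← mulVec_mulVec, h, mulVec_smul, smul_mulVec, smul_smul] at hu2
  exact smul_left_injective ℝ hu hu2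

theorem transpose_ne_of_abs_gram_lt [Fintype n] {Φ : Matrix n m ℝ} {j j' : m}
    (h : |(Φᵀ * Φ) j j'| < (Φᵀ * Φ) j j) : Φᵀ j ≠ Φᵀ j' := by
  intro heq
  change |Φᵀ j ⬝ᵥ Φᵀ j'| < Φᵀ j ⬝ᵥ Φᵀ j at h
  rw [← heq] at h
  exact (le_abs_self _).not_gt h

theorem gram_mulVec_single_sub [Fintype m] [DecidableEq m] {G : Matrix m m ℝ} {j j' : m}
    (hjj' : j ≠ j') {σ c : ℝ} (hσ : σ * σ = 1) (hj : G j j = c) (hj' : G j' j' = c)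
    (hsymm : G j' j = G j j') (hl : ∀ l, l ≠ j → l ≠ j' → G l j' = σ * G l j) :
    G *ᵥ (Pi.single j 1 - σ • Pi.single j' 1) =
      (c - σ * G j j') • (Pi.single j 1 - σ • Pi.single j' 1) := by
  ext l
  simp only [mulVec_sub, mulVec_smul, mulVec_single_one, Pi.sub_apply, Pi.smul_apply,
    smul_eq_mul, col_apply]
  by_cases hl1 : l = j
  · subst hl1; simp [hjj', hj]
  by_cases hl2 : l = j'
  · subst hl2
    simp only [hsymm, hj', ne_eq, hl1, not_false_eq_true, Pi.single_eq_of_ne,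
      Pi.single_eq_same, mul_one, zero_sub, mul_neg]
    linear_combination (-G j l) * hσ
  · simp only [hl l hl1 hl2, ne_eq, hl1, not_false_eq_true, Pi.single_eq_of_ne, hl2, mul_zero,
      sub_self]
    linear_combination (-G l j) * hσ

theorem gram_pair_eigenvalue [Fintype m] [DecidableEq m] {G : Matrix m m ℝ} {α : ℝ}
    (hG : G * G = α • G) {j j' : m} (hjj' : j ≠ j') {σ c : ℝ} (hσ : σ * σ = 1)
    (hj : G j j = c) (hj' : G j' j' = c) (hsymm : G j' j = G j j')
    (hl : ∀ l, l ≠ j → l ≠ j' → G l j' = σ * G l j) :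
    (c - σ * G j j') * (c - σ * G j j') = α * (c - σ * G j j') := by
  refine mul_self_eq_of_mulVec_eq_smul hG (fun h => ?_)
    (gram_mulVec_single_sub hjj' hσ hj hj' hsymm hl)
  simpa [hjj'] using congrFun h j

theorem gram_apply_comm [Fintype n] (Φ : Matrix n m ℝ) (j j' : m) :
    (Φᵀ * Φ) j' j = (Φᵀ * Φ) j j' := by
  simp only [mul_apply, transpose_apply, mul_comm]

end Frame

section ZeroOne
variable {ι : Type*} [Fintype ι] {f : ι → ℝ}

theorem sum_mul_self_of_zero_or_one (hf : ∀ i, f i = 0 ∨ f i = 1) :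
    ∑ i, f i * f i = ∑ i, f i :=
  sum_congr rfl fun i _ => by rcases hf i with h | h <;> simp [h]

theorem sum_eq_card_filter_of_zero_or_one [DecidableEq ι] (hf : ∀ i, f i = 0 ∨ f i = 1) :
    ∑ i, f i = #{i | f i = 1} := by
  rw [← sum_boole]
  exact sum_congr rfl fun i _ => by rcases hf i with h | h <;> simp [h]

theorem eq_zero_of_sum_eq_zero_of_zero_or_one (hf : ∀ i, f i = 0 ∨ f i = 1)
    (h : ∑ i, f i = 0) : f = 0 := by
  have hnn : ∀ i ∈ univ, 0 ≤ f i := fun i _ => by rcases hf i with h | h <;> simp [h]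
  exact funext fun i => (sum_eq_zero_iff_of_nonneg hnn).1 h i (mem_univ i)

theorem eq_one_of_sum_eq_card_of_zero_or_one (hf : ∀ i, f i = 0 ∨ f i = 1)
    (h : ∑ i, f i = Fintype.card ι) : f = 1 := by
  have h' := eq_zero_of_sum_eq_zero_of_zero_or_one (f := 1 - f)
    (fun i => by rcases hf i with h | h <;> simp [h]) (by simp [sum_sub_distrib, h])
  exact (sub_eq_zero.1 h').symm

end ZeroOne

section Incidence
variable {β π : Type*} [Fintype π] {X : Matrix β π ℝ}

theorem exists_nat_row_sum_of_zero_or_one [DecidableEq π] (h01 : ∀ a i, X a i = 0 ∨ X a i = 1)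
    {a₀ a₁ : β} (hne : X a₀ ≠ X a₁) (hrow : ∀ a, ∑ i, X a i = ∑ i, X a₀ i) :
    ∃ k : ℕ, 0 < k ∧ k < Fintype.card π ∧ ∀ a, ∑ i, X a i = k := by
  set k := #{i | X a₀ i = 1}
  have hk : ∀ a, ∑ i, X a i = k := fun a => by
    rw [hrow, sum_eq_card_filter_of_zero_or_one (h01 a₀)]
  refine ⟨k, Nat.pos_of_ne_zero fun h0 => hne ?_, lt_of_le_of_ne ?_ fun hv => hne ?_, hk⟩
  · rw [eq_zero_of_sum_eq_zero_of_zero_or_one (h01 a₀) (by simp [hk, h0]),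
      eq_zero_of_sum_eq_zero_of_zero_or_one (h01 a₁) (by simp [hk, h0])]
  · exact (card_filter_le _ _).trans_eq (card_univ)
  · rw [eq_one_of_sum_eq_card_of_zero_or_one (h01 a₀) (by simp [hk, hv]),
      eq_one_of_sum_eq_card_of_zero_or_one (h01 a₁) (by simp [hk, hv])]

theorem card_mul_col_sum_eq [Fintype β] {k : ℝ} (hrow : ∀ a, ∑ i, X a i = k)
    (hcol : ∀ i i', ∑ a, X a i = ∑ a, X a i') (i : π) :
    Fintype.card π * ∑ a, X a i = Fintype.card β * k := by
  calc (Fintype.card π : ℝ) * ∑ a, X a i = ∑ i', ∑ a, X a i' := by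
        simp [hcol _ i]
    _ = Fintype.card β * k := by
        rw [sum_comm]; simp [hrow]

theorem lambda_mul_eq_of_bibd [Fintype β] [DecidableEq π] (h01 : ∀ a i, X a i = 0 ∨ X a i = 1)
    {k r lam : ℝ} (hrow : ∀ a, ∑ i, X a i = k) (hcol : ∀ i, ∑ a, X a i = r)
    (hlam : ∀ i i', i ≠ i' → ∑ a, X a i * X a i' = lam) (i : π) :
    lam * (Fintype.card π - 1) = r * (k - 1) := by
  have hcount : ∑ i', ∑ a, X a i * X a i' = r * k := by
    rw [sum_comm]; simp [← mul_sum, hrow, ← sum_mul, hcol]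
  rw [← add_sum_erase _ _ (mem_univ i), sum_mul_self_of_zero_or_one (fun a => h01 a i), hcol,
    sum_congr rfl fun i' hi' => hlam i i' (ne_of_mem_erase hi').symm, sum_const,
    card_erase_of_mem (mem_univ i), card_univ, nsmul_eq_mul,
    Nat.cast_sub (Fintype.card_pos_iff.mpr ⟨i⟩)] at hcount
  push_cast at hcount
  linarith

/-- `X a i = 1` iff point `i` lies in block `a`. -/
def IsQSDIncidence [Fintype β] (X : Matrix β π ℝ) (k r lam x y : ℝ) : Prop :=
  (∀ a, ∑ i, X a i = k) ∧ (∀ i, ∑ a, X a i = r) ∧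
    (∀ i i', i ≠ i' → ∑ a, X a i * X a i' = lam) ∧
    (∀ a c, a ≠ c → ∑ i, X a i * X c i = x ∨ ∑ i, X a i * X c i = y) ∧
    (∃ a c, a ≠ c ∧ ∑ i, X a i * X c i = x) ∧ (∃ a c, a ≠ c ∧ ∑ i, X a i * X c i = y)

end Incidence

theorem sqrt_welch_spec {v b : ℝ} (hv : 1 < v) (hvb : v < b) :
    b * Real.sqrt (v * (b + 1 - v) / b) ^ 2 = v * (b + 1 - v) ∧
      0 < Real.sqrt (v * (b + 1 - v) / b) ∧ Real.sqrt (v * (b + 1 - v) / b) < v := by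
  have hb : 0 < b := by linarith
  have harg : 0 < v * (b + 1 - v) / b := div_pos (mul_pos (by linarith) (by linarith)) hb
  refine ⟨by rw [Real.sq_sqrt harg.le, mul_div_cancel₀ _ hb.ne'], Real.sqrt_pos.2 harg, ?_⟩
  rw [Real.sqrt_lt' (by linarith), div_lt_iff₀ hb]
  nlinarith [mul_pos (mul_pos (by linarith : 0 < v) (sub_pos.2 hv)) (by linarith : 0 < b + 1)]

theorem exists_designFrame_params {v b k w r lam : ℝ} (hv : 1 < v) (hb : 0 < b) (hk0 : 0 < k)
    (hkv : k < v) (hw : b * w ^ 2 = v * (b + 1 - v)) (hr : v * r = b * k)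
    (hlam : lam * (v - 1) = r * (k - 1)) :
    ∃ δ ε : ℝ, v * δ + ε * k = w ∧ ε ^ 2 * (r - lam) = b + 1 ∧
      v * δ ^ 2 + 2 * δ * ε * k + ε ^ 2 * k = v := by
  have hrl : (r - lam) * (v - 1) = r * (v - k) := by linear_combination -hlam
  have hr0 : 0 < r := pos_of_mul_pos_right (show 0 < v * r by rw [hr]; positivity) (by linarith)
  have hrl0 : 0 < r - lam := pos_of_mul_pos_left
    (show 0 < (r - lam) * (v - 1) by rw [hrl]; exact mul_pos hr0 (by linarith)) (by linarith)
  set ε := Real.sqrt ((b + 1) / (r - lam))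
  have hE : ε ^ 2 * (r - lam) = b + 1 := by
    rw [Real.sq_sqrt (by positivity), div_mul_cancel₀ _ hrl0.ne']
  have hsq : w ^ 2 + ε ^ 2 * k * (v - k) = v ^ 2 := mul_left_cancel₀ hb.ne' <| by
    linear_combination hw - ε ^ 2 * (v - k) * hr - ε ^ 2 * v * hrl + v * (v - 1) * hE
  set δ := (w - ε * k) / v
  have hδ : v * δ = w - ε * k := mul_div_cancel₀ _ (by positivity)
  refine ⟨δ, ε, by linarith, hE, mul_left_cancel₀ (by positivity : v ≠ 0) ?_⟩
  linear_combination (v * δ + w + ε * k) * hδ + hsq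

theorem sum_affine_mul_affine {ι : Type*} [Fintype ι] (δ ε : ℝ) (f g : ι → ℝ) :
    ∑ i, (δ + ε * f i) * (δ + ε * g i) =
      Fintype.card ι * δ ^ 2 + δ * ε * (∑ i, f i + ∑ i, g i) + ε ^ 2 * ∑ i, f i * g i := by
  have h : ∀ i, (δ + ε * f i) * (δ + ε * g i) =
      δ ^ 2 + δ * ε * f i + δ * ε * g i + ε ^ 2 * (f i * g i) := fun i => by ring
  simp only [h, sum_add_distrib, ← mul_sum, sum_const, card_univ, nsmul_eq_mul]
  ring

def designFrame {v b : ℕ} (δ ε : ℝ) (X : Matrix (Fin b) (Fin v) ℝ) :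
    Matrix (Fin v) (Fin (b + 1)) ℝ :=
  fun i => Fin.cons 1 (fun j => δ + ε * X j i)

section DesignFrame
variable {v b : ℕ} (δ ε : ℝ) (X : Matrix (Fin b) (Fin v) ℝ)

theorem gram_designFrame_zero_zero :
    ((designFrame δ ε X)ᵀ * designFrame δ ε X) 0 0 = v := by
  simp [mul_apply, designFrame]

theorem gram_designFrame_zero_succ (a : Fin b) :
    ((designFrame δ ε X)ᵀ * designFrame δ ε X) 0 a.succ = v * δ + ε * ∑ i, X a i := by
  simp [mul_apply, designFrame, sum_add_distrib, mul_sum]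

theorem gram_designFrame_succ_succ (a c : Fin b) :
    ((designFrame δ ε X)ᵀ * designFrame δ ε X) a.succ c.succ =
      v * δ ^ 2 + δ * ε * (∑ i, X a i + ∑ i, X c i) + ε ^ 2 * ∑ i, X a i * X c i := by
  simpa [mul_apply, designFrame] using sum_affine_mul_affine δ ε (X a) (X c)

theorem designFrame_mul_transpose_apply (i i' : Fin v) :
    (designFrame δ ε X * (designFrame δ ε X)ᵀ) i i' =
      1 + b * δ ^ 2 + δ * ε * (∑ a, X a i + ∑ a, X a i') + ε ^ 2 * ∑ a, X a i * X a i' := by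
  rw [mul_apply, Fin.sum_univ_succ]
  simpa [designFrame, add_assoc] using sum_affine_mul_affine δ ε (fun a => X a i) (fun a => X a i')

theorem transpose_mul_designFrame_mulVec_one :
    (designFrame δ ε X)ᵀ *ᵥ 1 = ((designFrame δ ε X)ᵀ * designFrame δ ε X) 0 := by
  ext j; simp [mulVec, dotProduct, mul_apply, designFrame]

end DesignFrame

section DesignFrameETF
variable {v b : ℕ} {δ ε w : ℝ} {X : Matrix (Fin b) (Fin v) ℝ}
local notation "𝒢" => (designFrame δ ε X)ᵀ * designFrame δ ε X

theorem tight_const_eq_of_designFrame {α : ℝ} (hv : 0 < v)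
    (htight : designFrame δ ε X * (designFrame δ ε X)ᵀ = α • 1) (hnorm : ∀ j, 𝒢 j j = v) :
    α = b + 1 := by
  have h := card_mul_eq_of_tight htight hnorm
  simp only [Fintype.card_fin, Nat.cast_add, Nat.cast_one] at h
  have hv' : (v : ℝ) ≠ 0 := by positivity
  exact mul_left_cancel₀ hv' (by linarith)

theorem equiangular_const_eq_of_designFrame {γ : ℝ} (hb : 0 < b)
    (htight : designFrame δ ε X * (designFrame δ ε X)ᵀ = ((b : ℝ) + 1) • 1)
    (hnorm : ∀ j, 𝒢 j j = v) (hγ : ∀ j j', j ≠ j' → |𝒢 j j'| = γ)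
    (hw : b * w ^ 2 = v * (b + 1 - v)) (hw0 : 0 ≤ w) : γ = w := by
  have h := welch_of_tight htight hnorm hγ 0
  have hγ0 : 0 ≤ γ := hγ 0 (Fin.succ ⟨0, hb⟩) (Fin.succ_ne_zero _).symm ▸ abs_nonneg _
  simp only [Fintype.card_fin, Nat.cast_add, Nat.cast_one, add_sub_cancel_right] at h
  refine (pow_left_inj₀ hγ0 hw0 two_ne_zero).1 (mul_left_cancel₀ (Nat.cast_ne_zero.2 hb.ne') ?_)
  linarith

theorem designFrame_col_succ_ne (hwv : w < v) (hnorm : ∀ j, 𝒢 j j = v)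
    (hγ : ∀ j j', j ≠ j' → |𝒢 j j'| = w) {a c : Fin b} (hac : a ≠ c) :
    (fun i => δ + ε * X a i) ≠ fun i => δ + ε * X c i := by
  refine transpose_ne_of_abs_gram_lt (Φ := designFrame δ ε X) (j := a.succ) (j' := c.succ) ?_
  rw [hγ _ _ (Fin.succ_injective _ |>.ne hac), hnorm]
  exact hwv

theorem col_sum_of_tight_designFrame {α : ℝ}
    (htight : designFrame δ ε X * (designFrame δ ε X)ᵀ = α • 1)
    (hzero : ∀ a : Fin b, 𝒢 0 a.succ = w) (i : Fin v) :
    v + w * (b * δ + ε * ∑ a, X a i) = α := by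
  have h := congrFun (congrArg (· *ᵥ (1 : Fin v → ℝ)) htight) i
  simp only [← mulVec_mulVec, transpose_mul_designFrame_mulVec_one, smul_mulVec, one_mulVec,
    Pi.smul_apply, Pi.one_apply, smul_eq_mul, mul_one] at h
  rw [← h, mulVec, dotProduct, Fin.sum_univ_succ, gram_designFrame_zero_zero]
  simp only [hzero, ← sum_mul]
  simp only [designFrame, Fin.cons_zero, one_mul, Fin.cons_succ, sum_add_distrib, sum_const,
    card_univ, Fintype.card_fin, nsmul_eq_mul, ← mul_sum]
  ring

theorem tight_diag_sub_offdiag_designFrame {α r : ℝ}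
    (htight : designFrame δ ε X * (designFrame δ ε X)ᵀ = α • 1)
    (h01 : ∀ a i, X a i = 0 ∨ X a i = 1) (hcol : ∀ i, ∑ a, X a i = r)
    {i i' : Fin v} (hii' : i ≠ i') : ε ^ 2 * (r - ∑ a, X a i * X a i') = α := by
  have hd := congrFun (congrFun htight i) i
  have ho := congrFun (congrFun htight i) i'
  rw [designFrame_mul_transpose_apply, sum_mul_self_of_zero_or_one fun a => h01 a i] at hd
  rw [designFrame_mul_transpose_apply] at ho
  simp only [hcol, Matrix.smul_apply, one_apply_eq, one_apply_ne hii', smul_eq_mul] at hd ho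
  linear_combination hd - ho

theorem gram_designFrame_succ_succ_eq_sub (h01 : ∀ a i, X a i = 0 ∨ X a i = 1) {k : ℝ}
    (hrow : ∀ a, ∑ i, X a i = k) (a c : Fin b) :
    𝒢 a.succ c.succ = 𝒢 a.succ a.succ - ε ^ 2 * (k - ∑ i, X a i * X c i) := by
  rw [gram_designFrame_succ_succ, gram_designFrame_succ_succ,
    sum_mul_self_of_zero_or_one (h01 a), hrow, hrow]
  ring

theorem false_of_gram_designFrame_succ_succ_const (hvb : v < b)
    (htight : designFrame δ ε X * (designFrame δ ε X)ᵀ = ((b : ℝ) + 1) • 1)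
    (hnorm : ∀ j, 𝒢 j j = v) (hzero : ∀ a : Fin b, 𝒢 0 a.succ = w)
    (hw : b * w ^ 2 = v * (b + 1 - v)) (hw0 : 0 ≤ w) (hwv : w < v) {σ : ℝ} (hσ : σ * σ = 1)
    (hall : ∀ a c : Fin b, a ≠ c → 𝒢 a.succ c.succ = σ * w) : False := by
  set a₀ : Fin b := ⟨0, by omega⟩
  have hsymm := gram_apply_comm (designFrame δ ε X)
  have hl : ∀ l, l ≠ 0 → l ≠ a₀.succ → 𝒢 l a₀.succ = σ * 𝒢 l 0 := fun l hl0 hl1 => by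
    obtain ⟨c, rfl⟩ := Fin.exists_succ_eq.2 hl0
    rw [hsymm, hall a₀ c (fun h => hl1 (h ▸ rfl)), hsymm, hzero]
  have h := gram_pair_eigenvalue (gram_mul_gram_of_tight htight) (Fin.succ_ne_zero a₀).symm
    hσ (hnorm 0) (hnorm _) (hsymm _ _) hl
  rw [hzero] at h
  have hσw : σ * w ≤ w := by nlinarith [sq_nonneg (σ - 1), sq_nonneg w]
  have hμ : (v : ℝ) - σ * w = b + 1 := mul_right_cancel₀ (by linarith) h
  have hw2 : w ^ 2 = (b + 1 - v) ^ 2 := by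
    linear_combination (-w ^ 2) * hσ - (σ * w + v - b - 1) * hμ
  have hb : (v : ℝ) + 1 ≤ b := by exact_mod_cast hvb
  have hbv : (b : ℝ) * (b + 1 - v) = v :=
    mul_left_cancel₀ (show (b : ℝ) + 1 - v ≠ 0 by linarith) (by linear_combination hw - b * hw2)
  nlinarith

theorem exists_row_sum_of_designFrame_etf (hvb : v < b) (hv : 1 < v)
    (h01 : ∀ a i, X a i = 0 ∨ X a i = 1) (hwv : w < v) (hnorm : ∀ j, 𝒢 j j = v)
    (hγ : ∀ j j', j ≠ j' → |𝒢 j j'| = w) (hzero : ∀ a : Fin b, 𝒢 0 a.succ = w) :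
    ε ≠ 0 ∧ ∃ k : ℕ, 0 < k ∧ k < v ∧ ∀ a, ∑ i, X a i = k := by
  set a₀ : Fin b := ⟨0, by omega⟩
  set a₁ : Fin b := ⟨1, by omega⟩
  have hne := designFrame_col_succ_ne hwv hnorm hγ (a := a₀) (c := a₁) (by simp [a₀, a₁])
  have hε : ε ≠ 0 := by rintro rfl; simp at hne
  refine ⟨hε, ?_⟩
  have hrow : ∀ a, ∑ i, X a i = ∑ i, X a₀ i := fun a => by
    have ha := hzero a
    have ha₀ := hzero a₀
    rw [gram_designFrame_zero_succ] at ha ha₀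
    exact mul_left_cancel₀ hε (by linarith)
  simpa using exists_nat_row_sum_of_zero_or_one h01 (fun h => hne (by rw [h])) hrow

theorem col_sum_eq_of_designFrame_etf (hv : 0 < v) (hw0 : 0 < w) (hε : ε ≠ 0) {α : ℝ}
    (htight : designFrame δ ε X * (designFrame δ ε X)ᵀ = α • 1)
    (hzero : ∀ a : Fin b, 𝒢 0 a.succ = w) {k : ℝ} (hrow : ∀ a, ∑ i, X a i = k) (i : Fin v) :
    ∑ a, X a i = b * k / v := by
  have hconst : ∀ i i', ∑ a, X a i = ∑ a, X a i' := fun i i' => by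
    have hi := col_sum_of_tight_designFrame htight hzero i
    have hi' := col_sum_of_tight_designFrame htight hzero i'
    exact mul_left_cancel₀ (mul_ne_zero hw0.ne' hε) (by linear_combination hi - hi')
  rw [eq_div_iff (by positivity)]
  simpa [mul_comm] using card_mul_col_sum_eq hrow hconst i

theorem pair_sum_eq_of_designFrame_etf (hv : 1 < v) (h01 : ∀ a i, X a i = 0 ∨ X a i = 1)
    (hε : ε ≠ 0) {α : ℝ} (htight : designFrame δ ε X * (designFrame δ ε X)ᵀ = α • 1)
    {k r : ℝ} (hrow : ∀ a, ∑ i, X a i = k) (hcol : ∀ i, ∑ a, X a i = r)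
    {i i' : Fin v} (hii' : i ≠ i') : ∑ a, X a i * X a i' = r * (k - 1) / (v - 1) := by
  have hlam : ∀ i i' : Fin v, i ≠ i' → ∑ a, X a i * X a i' = r - α / ε ^ 2 := fun i i' h => by
    rw [← tight_diag_sub_offdiag_designFrame htight h01 hcol h]
    field_simp
    ring
  rw [hlam i i' hii', eq_div_iff (sub_ne_zero.2 (by exact_mod_cast hv.ne'))]
  simpa using lambda_mul_eq_of_bibd h01 hrow hcol hlam i

theorem inter_eq_iff_gram_designFrame_eq (h01 : ∀ a i, X a i = 0 ∨ X a i = 1) {k r lam : ℝ}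
    (hrow : ∀ a, ∑ i, X a i = k) (hE : ε ^ 2 * (r - lam) = b + 1) {a : Fin b}
    (hnorm : 𝒢 a.succ a.succ = v) (c : Fin b) (u : ℝ) :
    ∑ i, X a i * X c i = k - u * (r - lam) / (b + 1) ↔ 𝒢 a.succ c.succ = v - u := by
  have hE0 : ε ^ 2 * (r - lam) ≠ 0 := hE ▸ by positivity
  rw [gram_designFrame_succ_succ_eq_sub h01 hrow, hnorm, ← hE, sub_right_inj,
    mul_div_mul_right _ _ (right_ne_zero_of_mul hE0), eq_sub_iff_add_eq, ← eq_sub_iff_add_eq',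
    div_eq_iff (left_ne_zero_of_mul hE0), eq_comm, mul_comm]

theorem isQSDIncidence_of_designFrame_etf (hvb : v < b) (hv : 1 < v)
    (h01 : ∀ a i, X a i = 0 ∨ X a i = 1)
    (htight : designFrame δ ε X * (designFrame δ ε X)ᵀ = ((b : ℝ) + 1) • 1)
    (hnorm : ∀ j, 𝒢 j j = v) (hγ : ∀ j j', j ≠ j' → |𝒢 j j'| = w)
    (hzero : ∀ a : Fin b, 𝒢 0 a.succ = w) (hw : b * w ^ 2 = v * (b + 1 - v)) (hw0 : 0 < w)
    (hwv : w < v) (hε : ε ≠ 0) {k : ℕ} (hrow : ∀ a, ∑ i, X a i = k) {r lam : ℝ}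
    (hr : r = b * k / v) (hlam : lam = r * (k - 1) / (v - 1)) :
    IsQSDIncidence X k r lam (k - (v + w) * (r - lam) / (b + 1))
      (k - (v - w) * (r - lam) / (b + 1)) := by
  have hcol : ∀ i, ∑ a, X a i = r := fun i => by
    rw [hr]; exact col_sum_eq_of_designFrame_etf (by omega) hw0 hε htight hzero hrow i
  have hpair : ∀ i i', i ≠ i' → ∑ a, X a i * X a i' = lam := fun i i' h => by
    rw [hlam]; exact pair_sum_eq_of_designFrame_etf hv h01 hε htight hrow hcol h
  have hE : ε ^ 2 * (r - lam) = b + 1 := by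
    have h01v : (⟨0, by omega⟩ : Fin v) ≠ ⟨1, hv⟩ := by simp
    rw [← hpair _ _ h01v]
    exact tight_diag_sub_offdiag_designFrame htight h01 hcol h01v
  have hx : ∀ a c : Fin b,
      ∑ i, X a i * X c i = k - (v + w) * (r - lam) / (b + 1) ↔ 𝒢 a.succ c.succ = -w :=
    fun a c => by rw [inter_eq_iff_gram_designFrame_eq h01 hrow hE (hnorm _), sub_add_cancel_left]
  have hy : ∀ a c : Fin b,
      ∑ i, X a i * X c i = k - (v - w) * (r - lam) / (b + 1) ↔ 𝒢 a.succ c.succ = w :=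
    fun a c => by rw [inter_eq_iff_gram_designFrame_eq h01 hrow hE (hnorm _), sub_sub_cancel]
  have hpm : ∀ a c : Fin b, a ≠ c → 𝒢 a.succ c.succ = w ∨ 𝒢 a.succ c.succ = -w :=
    fun a c hac => (abs_eq hw0.le).1 (hγ _ _ (Fin.succ_injective _ |>.ne hac))
  refine ⟨hrow, hcol, hpair, fun a c hac => ?_, ?_, ?_⟩
  · rw [hx, hy]
    exact (hpm a c hac).symm
  · by_contra! h
    refine false_of_gram_designFrame_succ_succ_const hvb htight hnorm hzero hw hw0.le hwv
      (one_mul 1) fun a c hac => ?_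
    rw [one_mul]
    exact (hpm a c hac).resolve_right fun h' => h a c hac ((hx a c).2 h')
  · by_contra! h
    refine false_of_gram_designFrame_succ_succ_const hvb htight hnorm hzero hw hw0.le hwv
      (by norm_num : (-1 : ℝ) * -1 = 1) fun a c hac => ?_
    rw [neg_one_mul]
    exact (hpm a c hac).resolve_left fun h' => h a c hac ((hy a c).2 h')

theorem gram_designFrame_diag (h01 : ∀ a i, X a i = 0 ∨ X a i = 1) {k : ℝ}
    (hrow : ∀ a, ∑ i, X a i = k) (hN : v * δ ^ 2 + 2 * δ * ε * k + ε ^ 2 * k = v)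
    (j : Fin (b + 1)) :
    𝒢 j j = v := by
  cases j using Fin.cases with
  | zero => exact gram_designFrame_zero_zero δ ε X
  | succ a =>
    rw [gram_designFrame_succ_succ, sum_mul_self_of_zero_or_one (h01 a), hrow]
    linear_combination hN

theorem designFrame_tight (hv : 0 < v) (h01 : ∀ a i, X a i = 0 ∨ X a i = 1) {k r lam : ℝ}
    (hcol : ∀ i, ∑ a, X a i = r) (hlam : ∀ i i', i ≠ i' → ∑ a, X a i * X a i' = lam)
    (hr : v * r = b * k) (hN : v * δ ^ 2 + 2 * δ * ε * k + ε ^ 2 * k = v)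
    (hE : ε ^ 2 * (r - lam) = b + 1) :
    designFrame δ ε X * (designFrame δ ε X)ᵀ = ((b : ℝ) + 1) • 1 := by
  have hD : b * δ ^ 2 + 2 * δ * ε * r + ε ^ 2 * r = b :=
    mul_left_cancel₀ (by positivity : (v : ℝ) ≠ 0)
      (by linear_combination b * hN + (2 * δ * ε + ε ^ 2) * hr)
  ext i i'
  rw [designFrame_mul_transpose_apply, hcol, hcol, Matrix.smul_apply, one_apply]
  split_ifs with h
  · subst h
    rw [sum_mul_self_of_zero_or_one fun a => h01 a i, hcol]
    linear_combination hD
  · rw [hlam _ _ h]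
    linear_combination hD - hE

theorem gram_designFrame_zero_succ_eq {k : ℝ} (hrow : ∀ a, ∑ i, X a i = k)
    (hW : v * δ + ε * k = w) (a : Fin b) : 𝒢 0 a.succ = w := by
  rw [gram_designFrame_zero_succ, hrow, hW]

theorem gram_designFrame_zero_pos (hv : 0 < v) {k : ℝ} (hrow : ∀ a, ∑ i, X a i = k)
    (hW : v * δ + ε * k = w) (hw0 : 0 < w) (j : Fin (b + 1)) : 0 < 𝒢 0 j := by
  cases j using Fin.cases with
  | zero => rw [gram_designFrame_zero_zero]; exact_mod_cast hv
  | succ a => rwa [gram_designFrame_zero_succ_eq hrow hW]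

theorem designFrame_equiangular (h01 : ∀ a i, X a i = 0 ∨ X a i = 1) {k r lam : ℝ}
    (hrow : ∀ a, ∑ i, X a i = k) (hW : v * δ + ε * k = w) (hE : ε ^ 2 * (r - lam) = b + 1)
    (hN : v * δ ^ 2 + 2 * δ * ε * k + ε ^ 2 * k = v) (hw0 : 0 ≤ w)
    (hinter : ∀ a c, a ≠ c → ∑ i, X a i * X c i = k - (v + w) * (r - lam) / (b + 1) ∨
      ∑ i, X a i * X c i = k - (v - w) * (r - lam) / (b + 1)) (j j' : Fin (b + 1)) (hjj' : j ≠ j') :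
    |𝒢 j j'| = w := by
  have hzero := gram_designFrame_zero_succ_eq hrow hW
  have hnorm := gram_designFrame_diag h01 hrow hN
  cases j using Fin.cases with
  | zero =>
    obtain ⟨c, rfl⟩ := Fin.exists_succ_eq.2 hjj'.symm
    rw [hzero, abs_of_nonneg hw0]
  | succ a =>
    cases j' using Fin.cases with
    | zero => rw [gram_apply_comm, hzero, abs_of_nonneg hw0]
    | succ c =>
      rcases hinter a c (fun h => hjj' (h ▸ rfl)) with h | h
      · rw [(inter_eq_iff_gram_designFrame_eq h01 hrow hE (hnorm _) c _).1 h, sub_add_cancel_left,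
          abs_neg, abs_of_nonneg hw0]
      · rw [(inter_eq_iff_gram_designFrame_eq h01 hrow hE (hnorm _) c _).1 h, sub_sub_cancel,
          abs_of_nonneg hw0]

end DesignFrameETF

/-- Characterization of ETFs of the form `Φ = [1 | δJ + εXᵀ]`:  for a `{0,1}`-valued `b × v`
matrix `X` with `b > v > 1`, there exist `δ, ε ∈ ℝ` such that the `b+1` columns of `Φ` form
an ETF for `ℝ^v` with `⟨φ₁, φ_j⟩ > 0` for all `j`, if and only if `X` is the incidence
matrix of a `QSD(v,k,λ,r,b,x,y)` with `0 < k < v` whose parameters satisfy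
`w = √(v(b+1−v)/b)`, `r = bk/v`, `λ = r(k−1)/(v−1)`, `x = k − (v+w)(r−λ)/(b+1)`,
`y = k − (v−w)(r−λ)/(b+1)`. -/
theorem etf_iff_qsd (v b : ℕ) (hvb : v < b) (hv : 1 < v)
    (X : Matrix (Fin b) (Fin v) ℝ)
    (h01 : ∀ i j, X i j = 0 ∨ X i j = 1) :
    (∃ δ ε : ℝ,
      let Φ : Matrix (Fin v) (Fin (b + 1)) ℝ :=
        fun i => Fin.cons 1 (fun j => δ + ε * X j i)
      (∀ j, ∑ i, Φ i j ^ 2 = (v : ℝ)) ∧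
      (∃ α : ℝ, 0 < α ∧ Φ * Φ.transpose = α • 1) ∧
      (∃ γ : ℝ, ∀ j j' : Fin (b + 1), j ≠ j' → |∑ i, Φ i j * Φ i j'| = γ) ∧
      (∀ j, 0 < ∑ i, Φ i 0 * Φ i j))
    ↔
    (∃ k : ℕ, 0 < k ∧ k < v ∧
      let w : ℝ := Real.sqrt ((v : ℝ) * ((b : ℝ) + 1 - v) / b)
      let r : ℝ := (b : ℝ) * k / v
      let lam : ℝ := r * ((k : ℝ) - 1) / ((v : ℝ) - 1)
      let x : ℝ := (k : ℝ) - ((v : ℝ) + w) * (r - lam) / ((b : ℝ) + 1)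
      let y : ℝ := (k : ℝ) - ((v : ℝ) - w) * (r - lam) / ((b : ℝ) + 1)
      (∀ i, ∑ j, X i j = (k : ℝ)) ∧
      (∀ j, ∑ i, X i j = r) ∧
      (∀ j j' : Fin v, j ≠ j' → ∑ i, X i j * X i j' = lam) ∧
      (∀ i i' : Fin b, i ≠ i' →
        (∑ j, X i j * X i' j = x ∨ ∑ j, X i j * X i' j = y)) ∧
      (∃ i i', i ≠ i' ∧ ∑ j, X i j * X i' j = x) ∧
      (∃ i i', i ≠ i' ∧ ∑ j, X i j * X i' j = y)) := by
  have hv0 : 0 < v := by omega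
  have hb0 : (0 : ℝ) < b := by exact_mod_cast (by omega : 0 < b)
  set w : ℝ := Real.sqrt ((v : ℝ) * ((b : ℝ) + 1 - v) / b)
  obtain ⟨hw, hw0, hwv⟩ : b * w ^ 2 = v * (b + 1 - v) ∧ 0 < w ∧ w < v :=
    sqrt_welch_spec (by exact_mod_cast hv) (by exact_mod_cast hvb)
  constructor
  · rintro ⟨δ, ε, hnorm, ⟨α, -, htight⟩, ⟨γ, hγ⟩, hpos⟩
    have hnorm' : ∀ j, ((designFrame δ ε X)ᵀ * designFrame δ ε X) j j = v := fun j =>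
      (sum_congr rfl fun i _ => (sq _).symm).trans (hnorm j)
    obtain rfl := tight_const_eq_of_designFrame hv0 htight hnorm'
    obtain rfl := equiangular_const_eq_of_designFrame (by omega) htight hnorm' hγ hw hw0.le
    have hzero : ∀ a : Fin b, ((designFrame δ ε X)ᵀ * designFrame δ ε X) 0 a.succ = w :=
      fun a => (abs_of_pos (hpos a.succ)).symm.trans (hγ 0 a.succ (Fin.succ_ne_zero a).symm)
    obtain ⟨hε, k, hk0, hkv, hrow⟩ :=
      exists_row_sum_of_designFrame_etf hvb hv h01 hwv hnorm' hγ hzero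
    exact ⟨k, hk0, hkv, isQSDIncidence_of_designFrame_etf hvb hv h01 htight hnorm' hγ hzero hw hw0
      hwv hε hrow rfl rfl⟩
  · rintro ⟨k, hk0, hkv, hrow, hcol, hlam, hinter, -, -⟩
    have hv1 : (v : ℝ) - 1 ≠ 0 := sub_ne_zero.2 (by exact_mod_cast hv.ne')
    obtain ⟨δ, ε, hW, hE, hN⟩ := exists_designFrame_params (k := k) (by exact_mod_cast hv) hb0
      (by exact_mod_cast hk0) (by exact_mod_cast hkv) hw (mul_div_cancel₀ _ (by positivity))
      (div_mul_cancel₀ _ hv1)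
    have hnorm := gram_designFrame_diag h01 hrow hN
    refine ⟨δ, ε, fun j => (sum_congr rfl fun i _ => sq _).trans (hnorm j),
      ⟨b + 1, by positivity, designFrame_tight hv0 h01 hcol hlam
        (mul_div_cancel₀ _ (by positivity)) hN hE⟩,
      ⟨w, designFrame_equiangular h01 hrow hW hE hN hw0.le hinter⟩,
      gram_designFrame_zero_pos hv0 hrow hW hw0⟩
end

section
/- If there exists a real {±1}-valued ETF of n vectors in R^d with n − 1 > d > 1 (not a regular simplex), then d is even, w = sqrt(d(n−d)/(n−1)) is an even integer, and n is divisible by 4. -/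
open Finset

private lemma sq3_aux (x y z : ℤ) (hx : x = 1 ∨ x = -1) (hy : y = 1 ∨ y = -1)
    (hz : z = 1 ∨ z = -1) : (8:ℤ) ∣ 2 + 2*(x*y + x*z + y*z) := by
  rcases hx with rfl|rfl <;> rcases hy with rfl|rfl <;> rcases hz with rfl|rfl <;> decide

private lemma caseA (D g u v w : ℤ) (hodd : ¬ (2 ∣ g)) (h1 : (4:ℤ) ∣ D - g)
    (h2 : (4:ℤ) ∣ D + (u + v + w)) (hu : u = g ∨ u = -g) (hv : v = g ∨ v = -g)
    (hw : w = g ∨ w = -g) : v * w = g * u := by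
  rcases hu with rfl|rfl <;> rcases hv with rfl|rfl <;> rcases hw with rfl|rfl <;>
    first | ring1 | (exfalso; omega)

private lemma caseB (D g u v w : ℤ) (hodd : ¬ (2 ∣ g)) (h1 : (4:ℤ) ∣ D + g)
    (h2 : (4:ℤ) ∣ D + (u + v + w)) (hu : u = g ∨ u = -g) (hv : v = g ∨ v = -g)
    (hw : w = g ∨ w = -g) : v * w = -(g * u) := by
  rcases hu with rfl|rfl <;> rcases hv with rfl|rfl <;> rcases hw with rfl|rfl <;>
    first | ring1 | (exfalso; omega)

private lemma sum_inner_inner {d n : ℕ} (ψ : Fin d → Fin n → ℤ)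
    (hrow : ∀ i i' : Fin d, (∑ j, ψ i j * ψ i' j) = if i = i' then (n:ℤ) else 0)
    (a b : Fin n) :
    ∑ j', (∑ i, ψ i a * ψ i j') * (∑ i, ψ i b * ψ i j')
      = (n:ℤ) * ∑ i, ψ i a * ψ i b := by
  calc ∑ j', (∑ i, ψ i a * ψ i j') * (∑ i, ψ i b * ψ i j')
      = ∑ j', ∑ i, ∑ i', (ψ i a * ψ i' b) * (ψ i j' * ψ i' j') := by
        refine Finset.sum_congr rfl fun j' _ => ?_
        rw [Finset.sum_mul_sum]
        exact Finset.sum_congr rfl fun i _ =>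
          Finset.sum_congr rfl fun i' _ => by ring
    _ = ∑ i, ∑ i', (ψ i a * ψ i' b) * ∑ j', (ψ i j' * ψ i' j') := by
        rw [Finset.sum_comm]
        refine Finset.sum_congr rfl fun i _ => ?_
        rw [Finset.sum_comm]
        exact Finset.sum_congr rfl fun i' _ => (Finset.mul_sum _ _ _).symm
    _ = ∑ i, ∑ i', (ψ i a * ψ i' b) * (if i = i' then (n:ℤ) else 0) := by
        refine Finset.sum_congr rfl fun i _ => Finset.sum_congr rfl fun i' _ => ?_
        rw [hrow]
    _ = ∑ i, (ψ i a * ψ i b) * (n:ℤ) := by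
        refine Finset.sum_congr rfl fun i _ => ?_
        simp only [mul_ite, mul_zero]
        rw [Finset.sum_ite_eq]
        simp
    _ = (n:ℤ) * ∑ i, ψ i a * ψ i b := by rw [← Finset.sum_mul, mul_comm]

set_option maxHeartbeats 1600000 in
/-- If there exists a real `{±1}`-valued ETF of `n` vectors in `ℝ^d` with `n − 1 > d > 1`,
then `d` is even, `w = √(d(n−d)/(n−1))` is an even integer, and `4 ∣ n`. -/
theorem real_flat_etf_necessary (d n : ℕ) (hd : 1 < d) (hdn : d < n - 1)
    (Φ : Matrix (Fin d) (Fin n) ℝ)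
    (hflat : ∀ i j, Φ i j = 1 ∨ Φ i j = -1)
    (htight : ∃ α : ℝ, 0 < α ∧ Φ * Φ.transpose = α • 1)
    (hang : ∃ γ : ℝ, ∀ j j', j ≠ j' → |∑ i, Φ i j * Φ i j'| = γ) :
    2 ∣ d ∧
    (∃ m : ℕ, 2 ∣ m ∧ (m : ℝ) = Real.sqrt ((d : ℝ) * ((n : ℝ) - d) / ((n : ℝ) - 1))) ∧
    4 ∣ n := by
  obtain ⟨α, hαpos, hΦ⟩ := htight
  obtain ⟨γ, hγ⟩ := hang
  -- basic numeric facts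
  have hn4 : 4 ≤ n := by omega
  have hd2 : 2 ≤ d := hd
  have hdn2 : d + 2 ≤ n := by omega
  -- the integer matrix
  classical
  set ψ : Fin d → Fin n → ℤ := fun i j => if Φ i j = 1 then 1 else -1 with hψdef
  have hψcast : ∀ i j, ((ψ i j : ℤ) : ℝ) = Φ i j := by
    intro i j
    rcases hflat i j with h | h
    · simp [hψdef, h]
    · rw [hψdef]
      simp only [h]
      norm_num
  have hψpm : ∀ i j, ψ i j = 1 ∨ ψ i j = -1 := by
    intro i j
    by_cases h : Φ i j = 1 <;> simp [hψdef, h]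
  have hsq : ∀ i j, Φ i j * Φ i j = 1 := by
    intro i j; rcases hflat i j with h | h <;> rw [h] <;> norm_num
  -- rows
  have hrowR : ∀ i i' : Fin d, ∑ j, Φ i j * Φ i' j = if i = i' then α else 0 := by
    intro i i'
    have h := congrFun (congrFun hΦ i) i'
    rw [Matrix.mul_apply] at h
    simp only [Matrix.transpose_apply, Matrix.smul_apply, Matrix.one_apply,
      smul_eq_mul] at h
    rw [h]
    by_cases hii : i = i' <;> simp [hii]
  have i0 : Fin d := ⟨0, by omega⟩
  have hα : α = n := by
    have h := hrowR ⟨0, by omega⟩ ⟨0, by omega⟩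
    simp only [if_pos rfl] at h
    rw [Finset.sum_congr rfl (fun j _ => hsq ⟨0, by omega⟩ j)] at h
    simpa using h.symm
  have hrowZ : ∀ i i' : Fin d, (∑ j, ψ i j * ψ i' j) = if i = i' then (n:ℤ) else 0 := by
    intro i i'
    have h := hrowR i i'
    rw [hα] at h
    have hc : ((∑ j, ψ i j * ψ i' j : ℤ) : ℝ) = ∑ j, Φ i j * Φ i' j := by
      push_cast
      exact Finset.sum_congr rfl fun j _ => by rw [hψcast, hψcast]
    by_cases hii : i = i'
    · rw [if_pos hii] at h ⊢; exact_mod_cast hc.trans h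
    · rw [if_neg hii] at h ⊢; exact_mod_cast hc.trans h
  -- integer Gram entries
  set Z : Fin n → Fin n → ℤ := fun j k => ∑ i, ψ i j * ψ i k with hZdef
  have hZcast : ∀ j k, ((Z j k : ℤ) : ℝ) = ∑ i, Φ i j * Φ i k := by
    intro j k
    rw [hZdef]
    push_cast
    exact Finset.sum_congr rfl fun i _ => by rw [hψcast, hψcast]
  have hZdiag : ∀ j, Z j j = (d : ℤ) := by
    intro j
    show (∑ i, ψ i j * ψ i j) = (d:ℤ)
    have : ∀ i ∈ Finset.univ, ψ i j * ψ i j = 1 := by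
      intro i _
      rcases hψpm i j with h | h <;> rw [h] <;> norm_num
    rw [Finset.sum_congr rfl this]
    simp
  have hZsymm : ∀ j k, Z j k = Z k j := by
    intro j k
    exact Finset.sum_congr rfl fun i _ => mul_comm _ _
  -- the common angle as an integer
  have a0 : Fin n := ⟨0, by omega⟩
  set g : ℤ := |Z ⟨0, by omega⟩ ⟨1, by omega⟩| with hgdef
  have hg0 : 0 ≤ g := abs_nonneg _
  have hγg : γ = (g : ℝ) := by
    have h := hγ ⟨0, by omega⟩ ⟨1, by omega⟩ (by simp [Fin.ext_iff])
    rw [← hZcast] at h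
    rw [← h, hgdef]
    push_cast
    rfl
  have hZg : ∀ j k, j ≠ k → Z j k = g ∨ Z j k = -g := by
    intro j k hjk
    have h := hγ j k hjk
    rw [← hZcast, hγg] at h
    have habs : |Z j k| = g := by exact_mod_cast h
    rcases abs_eq hg0 |>.mp habs with h' | h'
    · exact Or.inl h'
    · exact Or.inr h'
  -- the Gram identity
  have hP : ∀ a b : Fin n, ∑ j', Z a j' * Z b j' = (n:ℤ) * Z a b :=
    fun a b => sum_inner_inner ψ hrowZ a b
  set b0 : Fin n := ⟨0, by omega⟩ with hb0def
  set b1 : Fin n := ⟨1, by omega⟩ with hb1def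
  set b2 : Fin n := ⟨2, by omega⟩ with hb2def
  have hne01 : b0 ≠ b1 := by simp [hb0def, hb1def, Fin.ext_iff]
  have hne02 : b0 ≠ b2 := by simp [hb0def, hb2def, Fin.ext_iff]
  have hne12 : b1 ≠ b2 := by simp [hb1def, hb2def, Fin.ext_iff]
  have hgu : g = |Z b0 b1| := hgdef
  -- the norm identity
  have key2 : (n:ℤ) * d = (d:ℤ) * d + ((n:ℤ) - 1) * g^2 := by
    have h := hP b0 b0
    rw [hZdiag] at h
    rw [← Finset.sum_erase_add _ _ (Finset.mem_univ b0)] at h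
    have herase : ∀ j' ∈ Finset.univ.erase b0, Z b0 j' * Z b0 j' = g^2 := by
      intro j' hj'
      have hne : j' ≠ b0 := Finset.ne_of_mem_erase hj'
      rcases hZg b0 j' (Ne.symm hne) with h' | h' <;> rw [h'] <;> ring
    rw [Finset.sum_congr rfl herase, Finset.sum_const,
      Finset.card_erase_of_mem (Finset.mem_univ _), Finset.card_univ,
      Fintype.card_fin, hZdiag, nsmul_eq_mul] at h
    have hcast : ((n - 1 : ℕ) : ℤ) = (n:ℤ) - 1 := by
      have : (1:ℕ) ≤ n := by omega
      push_cast [this]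
      ring
    rw [hcast] at h
    linarith [h]
  have hgpos : 1 ≤ g := by
    rcases lt_or_eq_of_le hg0 with h | h
    · omega
    · exfalso
      have hg : g = 0 := h.symm
      rw [hg] at key2
      have h2 : (n:ℤ) * d = (d:ℤ) * d := by linarith [key2]
      have hdz : (d:ℤ) ≠ 0 := by
        have : (2:ℤ) ≤ (d:ℤ) := by exact_mod_cast hd2
        omega
      have h3 : (n:ℤ) = (d:ℤ) := mul_right_cancel₀ hdz h2
      have : n = d := by exact_mod_cast h3
      omega
  -- mod-4 triple identity for columns
  have htriple : ∀ a b c : Fin n, (4:ℤ) ∣ ((d:ℤ) + (Z a b + Z a c + Z b c)) := by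
    intro a b c
    have h8 : (8:ℤ) ∣ ∑ i, (2 + 2*(ψ i a * ψ i b + ψ i a * ψ i c + ψ i b * ψ i c)) :=
      Finset.dvd_sum fun i _ => sq3_aux _ _ _ (hψpm i a) (hψpm i b) (hψpm i c)
    have heq : ∑ i, (2 + 2*(ψ i a * ψ i b + ψ i a * ψ i c + ψ i b * ψ i c))
        = 2*(d:ℤ) + 2*(Z a b + Z a c + Z b c) := by
      simp only [hZdef]
      rw [Finset.sum_add_distrib, Finset.sum_const, Finset.card_univ, Fintype.card_fin,
        ← Finset.mul_sum, Finset.sum_add_distrib, Finset.sum_add_distrib, nsmul_eq_mul]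
      ring
    rw [heq] at h8
    omega
  have hd2' : (2:ℤ) ≤ (d:ℤ) := by exact_mod_cast hd2
  have hdn2' : (d:ℤ) + 2 ≤ (n:ℤ) := by exact_mod_cast hdn2
  have hn4' : (4:ℤ) ≤ (n:ℤ) := by exact_mod_cast hn4
  have hN2 : ((n - 2 : ℕ) : ℤ) = (n:ℤ) - 2 := by
    have : (2:ℕ) ≤ n := by omega
    push_cast [this]
    ring
  have hu : Z b0 b1 = g ∨ Z b0 b1 = -g := hZg _ _ hne01
  have hune : Z b0 b1 ≠ 0 := by rcases hu with h | h <;> omega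
  have hpair : ∑ j' ∈ ({b0, b1} : Finset (Fin n)), Z b0 j' * Z b1 j'
      = Z b0 b0 * Z b1 b0 + Z b0 b1 * Z b1 b1 := Finset.sum_pair hne01
  have hsplit : (∑ j' ∈ Finset.univ \ {b0, b1}, Z b0 j' * Z b1 j')
      + ∑ j' ∈ ({b0, b1} : Finset (Fin n)), Z b0 j' * Z b1 j'
      = ∑ j', Z b0 j' * Z b1 j' := Finset.sum_sdiff (Finset.subset_univ _)
  have hcard : (Finset.univ \ ({b0, b1} : Finset (Fin n))).card = n - 2 := by
    rw [Finset.card_sdiff_of_subset (Finset.subset_univ _), Finset.card_univ, Fintype.card_fin,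
      Finset.card_pair hne01]
  have hg2 : 2 ∣ g := by
    by_contra hodd
    have hd4 : (4:ℤ) ∣ (d:ℤ) - g ∨ (4:ℤ) ∣ (d:ℤ) + g := by
      have h := htriple b0 b1 b2
      rcases hZg _ _ hne01 with h1 | h1 <;> rcases hZg _ _ hne02 with h2 | h2 <;>
        rcases hZg _ _ hne12 with h3 | h3 <;> rw [h1, h2, h3] at h <;> omega
    rcases hd4 with hcase | hcase
    · -- every off-pair product is g * Z b0 b1
      have hkey : ∀ j' ∈ Finset.univ \ ({b0, b1} : Finset (Fin n)),
          Z b0 j' * Z b1 j' = g * Z b0 b1 := by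
        intro j' hj'
        simp only [Finset.mem_sdiff, Finset.mem_insert, Finset.mem_singleton] at hj'
        have hj0 : j' ≠ b0 := fun h => hj'.2 (Or.inl h)
        have hj1 : j' ≠ b1 := fun h => hj'.2 (Or.inr h)
        exact caseA (d:ℤ) g (Z b0 b1) (Z b0 j') (Z b1 j') hodd hcase
          (htriple b0 b1 j') (hZg _ _ hne01) (hZg _ _ (Ne.symm hj0)) (hZg _ _ (Ne.symm hj1))
      have hconst : ∑ j' ∈ Finset.univ \ ({b0, b1} : Finset (Fin n)), Z b0 j' * Z b1 j'
          = ((n:ℤ) - 2) * (g * Z b0 b1) := by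
        rw [Finset.sum_congr rfl hkey, Finset.sum_const, nsmul_eq_mul, hcard, hN2]
      have heq : (n:ℤ) * Z b0 b1
          = ((n:ℤ) - 2) * (g * Z b0 b1) + ((d:ℤ) * Z b0 b1 + Z b0 b1 * (d:ℤ)) := by
        rw [← hP b0 b1, ← hsplit, hconst, hpair, hZdiag, hZdiag, hZsymm b1 b0]
      have hfac : ((n:ℤ) - 2*(d:ℤ) - ((n:ℤ) - 2)*g) * Z b0 b1 = 0 := by
        linear_combination heq
      have hzero : (n:ℤ) - 2*(d:ℤ) - ((n:ℤ) - 2)*g = 0 := by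
        rcases mul_eq_zero.mp hfac with h | h
        · exact h
        · exact absurd h hune
      have hge : (n:ℤ) - 2 ≤ ((n:ℤ) - 2) * g := le_mul_of_one_le_right (by linarith) hgpos
      linarith
    · have hkey : ∀ j' ∈ Finset.univ \ ({b0, b1} : Finset (Fin n)),
          Z b0 j' * Z b1 j' = -(g * Z b0 b1) := by
        intro j' hj'
        simp only [Finset.mem_sdiff, Finset.mem_insert, Finset.mem_singleton] at hj'
        have hj0 : j' ≠ b0 := fun h => hj'.2 (Or.inl h)
        have hj1 : j' ≠ b1 := fun h => hj'.2 (Or.inr h)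
        exact caseB (d:ℤ) g (Z b0 b1) (Z b0 j') (Z b1 j') hodd hcase
          (htriple b0 b1 j') (hZg _ _ hne01) (hZg _ _ (Ne.symm hj0)) (hZg _ _ (Ne.symm hj1))
      have hconst : ∑ j' ∈ Finset.univ \ ({b0, b1} : Finset (Fin n)), Z b0 j' * Z b1 j'
          = ((n:ℤ) - 2) * (-(g * Z b0 b1)) := by
        rw [Finset.sum_congr rfl hkey, Finset.sum_const, nsmul_eq_mul, hcard, hN2]
      have heq : (n:ℤ) * Z b0 b1
          = ((n:ℤ) - 2) * (-(g * Z b0 b1)) + ((d:ℤ) * Z b0 b1 + Z b0 b1 * (d:ℤ)) := by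
        rw [← hP b0 b1, ← hsplit, hconst, hpair, hZdiag, hZdiag, hZsymm b1 b0]
      have hfac : ((n:ℤ) - 2*(d:ℤ) + ((n:ℤ) - 2)*g) * Z b0 b1 = 0 := by
        linear_combination heq
      have hzero : (n:ℤ) - 2*(d:ℤ) + ((n:ℤ) - 2)*g = 0 := by
        rcases mul_eq_zero.mp hfac with h | h
        · exact h
        · exact absurd h hune
      have hge : (n:ℤ) - 2 ≤ ((n:ℤ) - 2) * g := le_mul_of_one_le_right (by linarith) hgpos
      linarith
  -- d is even
  have hdeven : (2:ℤ) ∣ (d:ℤ) := by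
    have h := htriple b0 b1 b2
    rcases hZg _ _ hne01 with h1 | h1 <;> rcases hZg _ _ hne02 with h2 | h2 <;>
      rcases hZg _ _ hne12 with h3 | h3 <;> rw [h1, h2, h3] at h <;> omega
  -- d ≥ 3
  have hd3 : 3 ≤ d := by
    by_contra hlt
    have hdd : ((d:ℕ):ℤ) = 2 := by
      have : d = 2 := by omega
      exact_mod_cast congrArg (Nat.cast : ℕ → ℤ) this
    rw [hdd] at key2
    have hgge : 2 ≤ g := by omega
    have hg4 : 4 ≤ g^2 := by nlinarith [hgge]
    have hmono : ((n:ℤ) - 1) * 4 ≤ ((n:ℤ) - 1) * g^2 :=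
      mul_le_mul_of_nonneg_left hg4 (by linarith)
    linarith [key2, hmono]
  -- 4 ∣ n via three orthogonal rows
  have hn4dvd : (4:ℤ) ∣ (n:ℤ) := by
    obtain ⟨r0, hr0v⟩ : ∃ r : Fin d, (r:ℕ) = 0 := ⟨⟨0, by omega⟩, rfl⟩
    obtain ⟨r1, hr1v⟩ : ∃ r : Fin d, (r:ℕ) = 1 := ⟨⟨1, by omega⟩, rfl⟩
    obtain ⟨r2, hr2v⟩ : ∃ r : Fin d, (r:ℕ) = 2 := ⟨⟨2, by omega⟩, rfl⟩
    have hr01 : r0 ≠ r1 := by rw [Ne, Fin.ext_iff, hr0v, hr1v]; omega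
    have hr02 : r0 ≠ r2 := by rw [Ne, Fin.ext_iff, hr0v, hr2v]; omega
    have hr12 : r1 ≠ r2 := by rw [Ne, Fin.ext_iff, hr1v, hr2v]; omega
    have h8 : (8:ℤ) ∣ ∑ j, (2 + 2*(ψ r0 j * ψ r1 j + ψ r0 j * ψ r2 j + ψ r1 j * ψ r2 j)) :=
      Finset.dvd_sum fun j _ => sq3_aux _ _ _ (hψpm r0 j) (hψpm r1 j) (hψpm r2 j)
    have heq : ∑ j, (2 + 2*(ψ r0 j * ψ r1 j + ψ r0 j * ψ r2 j + ψ r1 j * ψ r2 j))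
        = 2*(n:ℤ) + 2*((∑ j, ψ r0 j * ψ r1 j) + (∑ j, ψ r0 j * ψ r2 j)
            + (∑ j, ψ r1 j * ψ r2 j)) := by
      rw [Finset.sum_add_distrib, Finset.sum_const, Finset.card_univ, Fintype.card_fin,
        ← Finset.mul_sum, Finset.sum_add_distrib, Finset.sum_add_distrib, nsmul_eq_mul]
      ring
    rw [heq, hrowZ r0 r1, hrowZ r0 r2, hrowZ r1 r2, if_neg hr01, if_neg hr02,
      if_neg hr12] at h8
    omega
  refine ⟨?_, ⟨g.toNat, ?_, ?_⟩, ?_⟩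
  · exact_mod_cast hdeven
  · omega
  · have hsqr : ((d:ℝ) * ((n:ℝ) - d) / ((n:ℝ) - 1)) = ((g:ℤ):ℝ)^2 := by
      have hc : ((n:ℕ):ℝ) * ((d:ℕ):ℝ)
          = ((d:ℕ):ℝ) * ((d:ℕ):ℝ) + (((n:ℕ):ℝ) - 1) * ((g:ℤ):ℝ)^2 := by
        exact_mod_cast key2
      have hnR : (4:ℝ) ≤ (n:ℝ) := by exact_mod_cast hn4
      have hne : (n:ℝ) - 1 ≠ 0 := by linarith
      field_simp
      nlinarith [hc]
    rw [hsqr, Real.sqrt_sq (by exact_mod_cast hg0 : (0:ℝ) ≤ ((g:ℤ):ℝ))]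
    exact_mod_cast congrArg (Int.cast : ℤ → ℝ) (Int.toNat_of_nonneg hg0)
  · exact_mod_cast hn4dvd
end

section
/- If n − 1 > d > 1 and there exists a real flat (i.e., {±1}-valued) ETF of n vectors in R^d, then sqrt(d(n−1)/(n−d)) and sqrt((n−d)(n−1)/d) are odd integers, sqrt(d(n−d)/(n−1)) is an even integer, and n is divisible by 16. -/
open Finset

private lemma odd_sq_mod8' (x : ℤ) (hx : Odd x) : (8:ℤ) ∣ x^2 - 1 := by
  obtain ⟨y, rfl⟩ := hx
  obtain ⟨z, hz⟩ := Int.even_mul_succ_self y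
  exact ⟨z, by linear_combination 4*hz⟩

private lemma gram_sq' {n d : ℕ} (e : Fin d → Fin n → ℤ) (N : ℤ)
    (h : ∀ i i', ∑ j, e i j * e i' j = if i = i' then N else 0) (j j' : Fin n) :
    ∑ j'', (∑ i, e i j * e i j'') * (∑ i, e i j'' * e i j') = N * ∑ i, e i j * e i j' := by
  have key : ∀ j'' : Fin n, (∑ i, e i j * e i j'') * (∑ i, e i j'' * e i j')
      = ∑ i, ∑ i', (e i j * e i' j') * (e i j'' * e i' j'') := by
    intro j''
    rw [Finset.sum_mul_sum]
    apply Finset.sum_congr rfl; intro i _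
    apply Finset.sum_congr rfl; intro i' _
    ring
  calc ∑ j'', (∑ i, e i j * e i j'') * (∑ i, e i j'' * e i j')
      = ∑ j'' : Fin n, ∑ i, ∑ i', (e i j * e i' j') * (e i j'' * e i' j'') :=
        Finset.sum_congr rfl fun j'' _ => key j''
    _ = ∑ i, ∑ i', (e i j * e i' j') * ∑ j'' : Fin n, (e i j'' * e i' j'') := by
        rw [Finset.sum_comm]
        apply Finset.sum_congr rfl; intro i _
        rw [Finset.sum_comm]
        apply Finset.sum_congr rfl; intro i' _
        rw [Finset.mul_sum]
    _ = ∑ i, (e i j * e i j') * N := by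
        apply Finset.sum_congr rfl; intro i _
        rw [Finset.sum_eq_single i]
        · rw [h i i]; simp
        · intro i' _ hne
          rw [h i i', if_neg (Ne.symm hne), mul_zero]
        · simp
    _ = N * ∑ i, e i j * e i j' := by
        rw [Finset.mul_sum]; apply Finset.sum_congr rfl; intros; ring

set_option maxHeartbeats 2000000 in
/-- If `n − 1 > d > 1` and there exists a real flat (`{±1}`-valued) ETF of `n` vectors in
`ℝ^d`, then `√(d(n−1)/(n−d))` and `√((n−d)(n−1)/d)` are odd integers,
`√(d(n−d)/(n−1))` is an even integer, and `16 ∣ n`. -/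
theorem real_flat_etf_integrality (d n : ℕ) (hd : 1 < d) (hdn : d < n - 1)
    (Φ : Matrix (Fin d) (Fin n) ℝ)
    (hflat : ∀ i j, Φ i j = 1 ∨ Φ i j = -1)
    (htight : ∃ α : ℝ, 0 < α ∧ Φ * Φ.transpose = α • 1)
    (hang : ∃ γ : ℝ, ∀ j j', j ≠ j' → |∑ i, Φ i j * Φ i j'| = γ) :
    (∃ m : ℕ, Odd m ∧ (m : ℝ) = Real.sqrt ((d : ℝ) * ((n : ℝ) - 1) / ((n : ℝ) - d))) ∧
    (∃ m : ℕ, Odd m ∧ (m : ℝ) = Real.sqrt (((n : ℝ) - d) * ((n : ℝ) - 1) / (d : ℝ))) ∧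
    (∃ m : ℕ, 2 ∣ m ∧ (m : ℝ) = Real.sqrt ((d : ℝ) * ((n : ℝ) - d) / ((n : ℝ) - 1))) ∧
    16 ∣ n := by
  have hn4 : 4 ≤ n := by omega
  have hnd2 : d + 2 ≤ n := by omega
  -- the sign matrix over ℤ
  set e : Fin d → Fin n → ℤ := fun i j => if Φ i j = 1 then 1 else -1 with he_def
  have he : ∀ i j, ((e i j : ℤ) : ℝ) = Φ i j := by
    intro i j
    rcases hflat i j with h | h <;> norm_num [he_def, h]
  have hepm : ∀ i j, e i j = 1 ∨ e i j = -1 := by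
    intro i j; rw [he_def]; dsimp only; split <;> simp
  have hesq : ∀ i j, e i j * e i j = 1 := by
    intro i j; rcases hepm i j with h | h <;> rw [h] <;> norm_num
  -- rows orthogonality over ℝ
  obtain ⟨α, hα, htight⟩ := htight
  have hent : ∀ i i', ∑ j, Φ i j * Φ i' j = if i = i' then α else 0 := by
    intro i i'
    have h := congrFun (congrFun htight i) i'
    rw [Matrix.mul_apply] at h
    simp only [Matrix.transpose_apply, Matrix.smul_apply, Matrix.one_apply, smul_eq_mul] at h
    rw [h]; split <;> simp
  have hΦsq : ∀ i j, Φ i j * Φ i j = 1 := by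
    intro i j; rcases hflat i j with h | h <;> rw [h] <;> norm_num
  have hd0 : 0 < d := by omega
  have hd1 : 1 < d := hd
  set i0 : Fin d := ⟨0, hd0⟩ with hi0_def
  set i1 : Fin d := ⟨1, hd1⟩ with hi1_def
  have hii01 : i0 ≠ i1 := by rw [hi0_def, hi1_def]; simp [Fin.ext_iff]
  have hαn : α = (n : ℝ) := by
    have h := hent i0 i0
    rw [if_pos rfl] at h
    rw [← h, Finset.sum_congr rfl fun j _ => hΦsq i0 j]
    simp
  -- rows orthogonality over ℤ
  have hrowZ : ∀ i i', ∑ j, e i j * e i' j = if i = i' then (n:ℤ) else 0 := by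
    intro i i'
    have key : ((∑ j, e i j * e i' j : ℤ) : ℝ) = ∑ j, Φ i j * Φ i' j := by
      push_cast
      exact Finset.sum_congr rfl fun j _ => by rw [he, he]
    have h2 := key.trans (hent i i')
    rw [hαn] at h2
    split
    · next hii => rw [if_pos hii] at h2; exact_mod_cast h2
    · next hii => rw [if_neg hii] at h2; exact_mod_cast h2
  -- n is even
  have hneven : 2 ∣ (n:ℤ) := by
    have hsum0 : ∑ j, e i0 j * e i1 j = 0 := by
      rw [hrowZ i0 i1, if_neg hii01]
    have hmod : ((0:ℤ)) % 2 = (n:ℤ) % 2 := by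
      rw [← hsum0, Finset.sum_int_mod]
      rw [Finset.sum_congr rfl fun j _ => show (e i0 j * e i1 j) % 2 = (1:ℤ) % 2 by
        rcases hepm i0 j with h | h <;> rcases hepm i1 j with h' | h' <;> rw [h, h'] <;> norm_num]
      simp [Finset.sum_const]
    omega
  -- the Gram entries
  set g : Fin n → Fin n → ℤ := fun j j' => ∑ i, e i j * e i j' with hg_def
  have hgsymm : ∀ j j', g j j' = g j' j := by
    intro j j'
    exact Finset.sum_congr rfl fun i _ => mul_comm _ _
  have hgd : ∀ j, g j j = (d:ℤ) := by
    intro j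
    rw [hg_def]; dsimp only
    rw [Finset.sum_congr rfl fun i _ => hesq i j]
    simp
  have hgR : ∀ j j', ((g j j' : ℤ) : ℝ) = ∑ i, Φ i j * Φ i j' := by
    intro j j'
    rw [hg_def]; push_cast
    exact Finset.sum_congr rfl fun i _ => by rw [he, he]
  obtain ⟨γ, hγ⟩ := hang
  have hn0 : 0 < n := by omega
  have hn1 : 1 < n := by omega
  set j0 : Fin n := ⟨0, hn0⟩ with hj0_def
  set j1 : Fin n := ⟨1, hn1⟩ with hj1_def
  have hj01 : j0 ≠ j1 := by rw [hj0_def, hj1_def]; simp [Fin.ext_iff]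
  set c : ℤ := |g j0 j1| with hc_def
  have hc0 : 0 ≤ c := abs_nonneg _
  have hgabs : ∀ j j', j ≠ j' → |g j j'| = c := by
    intro j j' hjj
    have h1 := hγ j j' hjj
    have h2 := hγ j0 j1 hj01
    rw [← hgR] at h1 h2
    rw [← Int.cast_abs] at h1 h2
    rw [hc_def]
    exact_mod_cast h1.trans h2.symm
  have hG2 : ∀ j j', ∑ j'', g j j'' * g j'' j' = (n:ℤ) * g j j' := fun j j' => gram_sq' e n hrowZ j j'
  -- star identity
  have hstar : ((n:ℤ) - 1) * c^2 = (d:ℤ) * ((n:ℤ) - (d:ℤ)) := by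
    have h := hG2 j0 j0
    rw [hgd j0] at h
    rw [← Finset.sum_erase_add _ _ (Finset.mem_univ j0)] at h
    rw [hgd j0] at h
    have hconst : ∑ j'' ∈ Finset.univ.erase j0, g j0 j'' * g j'' j0 = ((n:ℤ) - 1) * c^2 := by
      rw [Finset.sum_congr rfl fun j'' hj'' => by
        rw [hgsymm j'' j0, ← sq, ← sq_abs, hgabs j0 j'' (Ne.symm (Finset.ne_of_mem_erase hj''))]]
      rw [Finset.sum_const, Finset.card_erase_of_mem (Finset.mem_univ j0), Finset.card_univ,
        Fintype.card_fin]
      have : ((n - 1 : ℕ) : ℤ) = (n:ℤ) - 1 := by omega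
      rw [nsmul_eq_mul, this]
    rw [hconst] at h
    linarith
  -- c is nonzero
  have hcne : c ≠ 0 := by
    intro h0
    rw [h0] at hstar
    have h1 : (0:ℤ) < (d:ℤ) * ((n:ℤ) - (d:ℤ)) := by
      apply mul_pos
      · exact_mod_cast hd0
      · have : (d:ℤ) + 2 ≤ (n:ℤ) := by exact_mod_cast hnd2
        linarith
    simp at hstar
    rcases hstar with h | h
    · omega
    · omega
  have hc1 : 1 ≤ c := by omega
  have hgdvd : ∀ j j', j ≠ j' → c ∣ g j j' := by
    intro j j' hjj
    rw [← hgabs j j' hjj]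
    exact (abs_dvd _ _).mpr dvd_rfl
  -- c divides n - 2d
  have hdvd1 : c ∣ ((n:ℤ) - 2*(d:ℤ)) := by
    have h := hG2 j0 j1
    rw [← Finset.sum_erase_add _ _ (Finset.mem_univ j0)] at h
    have hj1mem : j1 ∈ Finset.univ.erase j0 := Finset.mem_erase.mpr ⟨Ne.symm hj01, Finset.mem_univ _⟩
    rw [← Finset.sum_erase_add _ _ hj1mem] at h
    rw [hgd j0, hgd j1] at h
    have hT : c^2 ∣ ∑ j'' ∈ (Finset.univ.erase j0).erase j1, g j0 j'' * g j'' j1 := by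
      apply Finset.dvd_sum
      intro j'' hj''
      have h1 : j'' ≠ j1 := Finset.ne_of_mem_erase hj''
      have h2 : j'' ≠ j0 := Finset.ne_of_mem_erase (Finset.mem_of_mem_erase hj'')
      rw [sq]
      exact mul_dvd_mul (hgdvd j0 j'' (Ne.symm h2)) (hgdvd j'' j1 h1)
    have hTval : ∑ j'' ∈ (Finset.univ.erase j0).erase j1, g j0 j'' * g j'' j1
        = ((n:ℤ) - 2*(d:ℤ)) * g j0 j1 := by linarith
    rw [hTval] at hT
    rcases (abs_eq hc0).mp (hgabs j0 j1 hj01) with hgc | hgc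
    · rw [hgc, sq] at hT
      exact (mul_dvd_mul_iff_right hcne).mp hT
    · rw [hgc, mul_neg, dvd_neg, sq] at hT
      exact (mul_dvd_mul_iff_right hcne).mp hT
  obtain ⟨k, hk⟩ := hdvd1
  -- c divides 2d
  have h11 : (c*k + 2*(d:ℤ))^2 = c^2 * (k^2 + 4*((n:ℤ)-1)) := by
    linear_combination (-4*(d:ℤ))*hk - 4*hstar
  have hc2d : c ∣ 2*(d:ℤ) := by
    have hdd : c ∣ c*k + 2*(d:ℤ) := by
      have : c^2 ∣ (c*k + 2*(d:ℤ))^2 := ⟨k^2 + 4*((n:ℤ)-1), h11⟩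
      exact (Int.pow_dvd_pow_iff two_ne_zero).mp this
    have : c*k + 2*(d:ℤ) - c*k = 2*(d:ℤ) := by ring
    rw [← this]
    exact dvd_sub hdd ⟨k, rfl⟩
  obtain ⟨m, hm⟩ := hc2d
  have h13 : (k+m)^2 = k^2 + 4*((n:ℤ)-1) := by
    have hcc : c^2*((k+m)^2) = c^2*(k^2 + 4*((n:ℤ)-1)) := by
      linear_combination h11 - (2*c*k + c*m + 2*(d:ℤ))*hm
    exact mul_left_cancel₀ (pow_ne_zero 2 hcne) hcc
  have hmm : m * (m + 2*k) = 4*((n:ℤ)-1) := by linear_combination h13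
  -- m is even
  have hmeven : 2 ∣ m := by
    rcases Int.even_or_odd m with he' | ho'
    · exact he'.two_dvd
    · exfalso
      have h1 : Odd (m * (m + 2*k)) := ho'.mul (by
        obtain ⟨r, hr⟩ := ho'
        exact ⟨r + k, by omega⟩)
      rw [hmm] at h1
      rcases h1 with ⟨r, hr⟩
      omega
  obtain ⟨a, ha2⟩ := hmeven
  have hac : c * a = (d:ℤ) := by
    have h2 : 2*(c*a) = 2*(d:ℤ) := by rw [ha2] at hm; linear_combination -hm
    linarith
  set b : ℤ := a + k with hb_def
  have hbc : c * b = (n:ℤ) - (d:ℤ) := by rw [hb_def]; linear_combination hac - hk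
  have hab : a * b = (n:ℤ) - 1 := by
    have h4 : (4:ℤ)*(a*b) = 4*((n:ℤ)-1) := by
      rw [hb_def]; rw [ha2] at hmm; linear_combination hmm
    linarith
  -- positivity and oddness of a, b
  have hdZ : (2:ℤ) ≤ (d:ℤ) := by exact_mod_cast hd
  have hnZ : (d:ℤ) + 2 ≤ (n:ℤ) := by exact_mod_cast hnd2
  have hdnZ : (d:ℤ) < (n:ℤ) - 1 := by
    have : d + 1 < n := by omega
    have := (Int.ofNat_lt).mpr this
    push_cast at this ⊢
    linarith
  have ha0 : 0 < a := by nlinarith [hac]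
  have hb0 : 0 < b := by nlinarith [hbc]
  have hodd_ab : Odd a ∧ Odd b := by
    rw [← Int.odd_mul, hab, Int.odd_iff]
    omega
  -- c is even: the flat-ETF two-graph argument
  obtain ⟨haodd, hbodd⟩ := hodd_ab
  have hceven : 2 ∣ c := by
    by_contra hco
    have hcodd : c % 2 = 1 := by omega
    -- triple congruence
    have htriple : ∀ ja jb jc : Fin n, ja ≠ jb → ja ≠ jc → jb ≠ jc →
        (4:ℤ) ∣ ((d:ℤ) + g ja jb + g ja jc + g jb jc) := by
      intro ja jb jc h1 h2 h3
      have hpt : ∀ i : Fin d, (e i ja + e i jb + e i jc)^2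
          = 3 + 2*(e i ja * e i jb + e i ja * e i jc + e i jb * e i jc) := by
        intro i
        linear_combination hesq i ja + hesq i jb + hesq i jc
      have hodd8 : (8:ℤ) ∣ ∑ i, ((e i ja + e i jb + e i jc)^2 - 1) := by
        apply Finset.dvd_sum
        intro i _
        apply odd_sq_mod8'
        have o1 : Odd (e i ja) := by
          rcases hepm i ja with h|h <;> rw [h]
          · exact odd_one
          · exact ⟨-1, by ring⟩
        have o2 : Odd (e i jb) := by
          rcases hepm i jb with h|h <;> rw [h]
          · exact odd_one
          · exact ⟨-1, by ring⟩
        have o3 : Odd (e i jc) := by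
          rcases hepm i jc with h|h <;> rw [h]
          · exact odd_one
          · exact ⟨-1, by ring⟩
        exact (o1.add_odd o2).add_odd o3
      have hsum : ∑ i, ((e i ja + e i jb + e i jc)^2 - 1)
          = 2*(d:ℤ) + 2*(g ja jb + g ja jc + g jb jc) := by
        rw [Finset.sum_congr rfl fun i _ => by rw [hpt i]]
        rw [hg_def]
        simp only [Finset.sum_add_distrib, Finset.sum_sub_distrib, Finset.sum_const,
          Finset.card_univ, Fintype.card_fin, ← Finset.mul_sum, Finset.smul_sum]
        ring
      rw [hsum] at hodd8
      obtain ⟨q, hq⟩ := hodd8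
      exact ⟨q, by omega⟩
    set η : ℤ := if a % 4 = 1 then 1 else -1 with hEta_def
    have hηpm : η = 1 ∨ η = -1 := by rw [hEta_def]; split <;> simp
    have hsign : ∀ s s' t : ℤ, (s = 1 ∨ s = -1) → (s' = 1 ∨ s' = -1) → (t = 1 ∨ t = -1) →
        (4:ℤ) ∣ c*(a + s + s' + t) → t = η * s * s' := by
      intro s s' t hs hs' ht hdvd4
      have hcop : IsCoprime (4:ℤ) c := by
        have h2 : IsCoprime (2:ℤ) c := (Int.prime_two.coprime_iff_not_dvd).mpr (by omega)
        have h4 : (4:ℤ) = 2*2 := by norm_num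
        rw [h4]
        exact IsCoprime.mul_left h2 h2
      have h4 : (4:ℤ) ∣ (a + s + s' + t) := hcop.dvd_of_dvd_mul_left hdvd4
      have ha2' : a % 2 = 1 := Int.odd_iff.mp haodd
      rw [hEta_def]
      rcases hs with rfl|rfl <;> rcases hs' with rfl|rfl <;> rcases ht with rfl|rfl <;>
        split <;> omega
    set S : Fin n → ℤ := fun j => if j = j0 then η else if g j0 j = c then 1 else -1 with hS_def
    have hSpm : ∀ j, S j = 1 ∨ S j = -1 := by
      intro j; rw [hS_def]; dsimp only; split
      · exact hηpm
      · split <;> simp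
    have hSj0 : S j0 = η := by rw [hS_def]; simp
    have hgj0 : ∀ j, j ≠ j0 → g j0 j = S j * c := by
      intro j hj
      rw [hS_def]; dsimp only; rw [if_neg hj]
      rcases (abs_eq hc0).mp (hgabs j0 j (Ne.symm hj)) with h | h
      · rw [if_pos h, one_mul]; exact h
      · have hne' : ¬ (g j0 j = c) := by intro hh; rw [hh] at h; omega
        rw [if_neg hne', h]; ring
    have hkey : ∀ j j', j ≠ j' → g j j' = η * S j * S j' * c := by
      have main : ∀ j j', j ≠ j' → j ≠ j0 → j' ≠ j0 → g j j' = η * S j * S j' * c := by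
        intro j j' hjj hj hj'
        rcases (abs_eq hc0).mp (hgabs j j' hjj) with h | h
        · have h4 : (4:ℤ) ∣ c*(a + S j + S j' + 1) := by
            have heq : (d:ℤ) + g j0 j + g j0 j' + g j j' = c*(a + S j + S j' + 1) := by
              rw [hgj0 j hj, hgj0 j' hj', h, ← hac]; ring
            rw [← heq]
            exact htriple j0 j j' (Ne.symm hj) (Ne.symm hj') hjj
          have ht := hsign (S j) (S j') 1 (hSpm j) (hSpm j') (Or.inl rfl) h4
          rw [h, ← ht]; ring
        · have h4 : (4:ℤ) ∣ c*(a + S j + S j' + (-1)) := by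
            have heq : (d:ℤ) + g j0 j + g j0 j' + g j j' = c*(a + S j + S j' + (-1)) := by
              rw [hgj0 j hj, hgj0 j' hj', h, ← hac]; ring
            rw [← heq]
            exact htriple j0 j j' (Ne.symm hj) (Ne.symm hj') hjj
          have ht := hsign (S j) (S j') (-1) (hSpm j) (hSpm j') (Or.inr rfl) h4
          rw [h, ← ht]; ring
      intro j j' hjj
      by_cases hj : j = j0
      · subst hj
        rw [hgj0 j' (Ne.symm hjj), hSj0]
        rcases hηpm with h | h <;> rw [h] <;> ring
      · by_cases hj' : j' = j0
        · subst hj'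
          rw [hgsymm, hgj0 j hj, hSj0]
          rcases hηpm with h | h <;> rw [h] <;> ring
        · exact main j j' hjj hj hj'
    set lam : ℤ := (d:ℤ) + η*c*((n:ℤ)-1) with hlam_def
    have heig : ∀ j, ∑ j', g j j' * S j' = lam * S j := by
      intro j
      rw [← Finset.sum_erase_add _ _ (Finset.mem_univ j)]
      have hrest : ∑ j' ∈ Finset.univ.erase j, g j j' * S j' = ((n:ℤ)-1) * (η * S j * c) := by
        rw [Finset.sum_congr rfl (fun j' hj' =>
          show g j j' * S j' = η * S j * c by
            rw [hkey j j' (Ne.symm (Finset.ne_of_mem_erase hj'))]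
            rcases hSpm j' with h | h <;> rw [h] <;> ring)]
        rw [Finset.sum_const, Finset.card_erase_of_mem (Finset.mem_univ j), Finset.card_univ,
          Fintype.card_fin, nsmul_eq_mul]
        have hcast : ((n-1:ℕ):ℤ) = (n:ℤ)-1 := by omega
        rw [hcast]
      rw [hrest, hgd j, hlam_def]
      ring
    have hswap : ∑ j', (∑ j'', g j0 j'' * g j'' j') * S j'
        = ∑ j'', g j0 j'' * (∑ j', g j'' j' * S j') := by
      simp only [Finset.sum_mul, Finset.mul_sum]
      rw [Finset.sum_comm]
      exact Finset.sum_congr rfl fun j'' _ => Finset.sum_congr rfl fun j' _ => by ring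
    have hA : ∑ j', (∑ j'', g j0 j'' * g j'' j') * S j' = (n:ℤ) * (lam * η) := by
      calc ∑ j', (∑ j'', g j0 j'' * g j'' j') * S j'
          = ∑ j', (n:ℤ) * (g j0 j' * S j') := Finset.sum_congr rfl fun j' _ => by rw [hG2]; ring
        _ = (n:ℤ) * ∑ j', g j0 j' * S j' := by rw [Finset.mul_sum]
        _ = (n:ℤ) * (lam * η) := by rw [heig j0, hSj0]
    have hB : ∑ j', (∑ j'', g j0 j'' * g j'' j') * S j' = lam * (lam * η) := by
      rw [hswap]
      calc ∑ j'', g j0 j'' * (∑ j', g j'' j' * S j')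
          = ∑ j'', lam * (g j0 j'' * S j'') := Finset.sum_congr rfl fun j'' _ => by
              rw [heig j'']; ring
        _ = lam * ∑ j'', g j0 j'' * S j'' := by rw [Finset.mul_sum]
        _ = lam * (lam * η) := by rw [heig j0, hSj0]
    have hfactor : (lam - (n:ℤ)) * (lam * η) = 0 := by linear_combination hA - hB
    have hbound : (n:ℤ) - 1 ≤ c * ((n:ℤ)-1) := le_mul_of_one_le_left (by linarith) hc1
    have hcases : lam = (n:ℤ) ∨ lam = 0 := by
      rcases mul_eq_zero.mp hfactor with h | h
      · left; linarith
      · rcases mul_eq_zero.mp h with h' | h'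
        · right; exact h'
        · exfalso; rcases hηpm with h1|h1 <;> omega
    rcases hcases with h | h <;> rw [hlam_def] at h <;>
      rcases hηpm with h1 | h1 <;> rw [h1] at h <;> linarith [hbound, hdZ, hdnZ]
  -- 16 divides n
  have hnsum : c*(a+b) = (n:ℤ) := by linear_combination hac + hbc
  have h8a : (8:ℤ) ∣ a^2 - 1 := odd_sq_mod8' a haodd
  have hab2 : (2:ℤ) ∣ a + b := by
    rcases haodd with ⟨x,hx⟩; rcases hbodd with ⟨y,hy⟩; omega
  have habn : a*b + 1 = (n:ℤ) := by omega
  have h4n : (4:ℤ) ∣ (n:ℤ) := by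
    rw [← hnsum]
    have h := mul_dvd_mul hceven hab2
    norm_num at h
    exact h
  have h4ab : (4:ℤ) ∣ a + b := by
    have h1 : (4:ℤ) ∣ a*(a*b+1) := by
      apply Dvd.dvd.mul_left _ a
      rw [habn]; exact h4n
    have h2 : (4:ℤ) ∣ (a^2-1)*b := Dvd.dvd.mul_right (dvd_trans (by norm_num) h8a) b
    have h3 := dvd_sub h1 h2
    have heq : a*(a*b+1) - (a^2-1)*b = a + b := by ring
    rwa [heq] at h3
  have h8n : (8:ℤ) ∣ (n:ℤ) := by
    rw [← hnsum]
    have h := mul_dvd_mul hceven h4ab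
    norm_num at h
    exact h
  have h8ab : (8:ℤ) ∣ a + b := by
    have h1 : (8:ℤ) ∣ a*(a*b+1) := by
      apply Dvd.dvd.mul_left _ a
      rw [habn]; exact h8n
    have h2 : (8:ℤ) ∣ (a^2-1)*b := Dvd.dvd.mul_right h8a b
    have h3 := dvd_sub h1 h2
    have heq : a*(a*b+1) - (a^2-1)*b = a + b := by ring
    rwa [heq] at h3
  have h16 : (16:ℤ) ∣ (n:ℤ) := by
    rw [← hnsum]
    have h := mul_dvd_mul hceven h8ab
    norm_num at h
    exact h
  have h16n : 16 ∣ n := by exact_mod_cast h16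
  -- the integer square identities
  have hZa : a^2*((n:ℤ)-(d:ℤ)) = (d:ℤ)*((n:ℤ)-1) := by
    calc a^2*((n:ℤ)-(d:ℤ)) = a*a*(c*b) := by rw [hbc]; ring
      _ = (c*a)*(a*b) := by ring
      _ = (d:ℤ)*((n:ℤ)-1) := by rw [hac, hab]
  have hZb : b^2*(d:ℤ) = ((n:ℤ)-(d:ℤ))*((n:ℤ)-1) := by
    calc b^2*(d:ℤ) = b*b*(c*a) := by rw [hac]; ring
      _ = (c*b)*(a*b) := by ring
      _ = ((n:ℤ)-(d:ℤ))*((n:ℤ)-1) := by rw [hbc, hab]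
  have hZc : c^2*((n:ℤ)-1) = (d:ℤ)*((n:ℤ)-(d:ℤ)) := by linear_combination hstar
  -- real facts
  have hndR : ((n:ℝ)) - (d:ℝ) ≠ 0 := by
    have h : (d:ℝ) + 2 ≤ (n:ℝ) := by exact_mod_cast hnd2
    linarith
  have hdR : (d:ℝ) ≠ 0 := by
    have h : (0:ℝ) < (d:ℝ) := by exact_mod_cast hd0
    linarith
  have hn1R : ((n:ℝ)) - 1 ≠ 0 := by
    have h : (4:ℝ) ≤ (n:ℝ) := by exact_mod_cast hn4
    linarith
  refine ⟨⟨a.natAbs, Int.natAbs_odd.mpr haodd, ?_⟩, ⟨b.natAbs, Int.natAbs_odd.mpr hbodd, ?_⟩,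
    ⟨c.natAbs, ?_, ?_⟩, h16n⟩
  · have hXa : (d:ℝ)*((n:ℝ)-1)/((n:ℝ)-(d:ℝ)) = (((a:ℤ)):ℝ)^2 := by
      rw [div_eq_iff hndR]
      exact_mod_cast hZa.symm
    rw [hXa, Real.sqrt_sq (by exact_mod_cast ha0.le)]
    rw [Nat.cast_natAbs]
    exact congrArg (fun z : ℤ => (z:ℝ)) (abs_of_nonneg ha0.le)
  · have hXb : ((n:ℝ)-(d:ℝ))*((n:ℝ)-1)/(d:ℝ) = (((b:ℤ)):ℝ)^2 := by
      rw [div_eq_iff hdR]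
      exact_mod_cast hZb.symm
    rw [hXb, Real.sqrt_sq (by exact_mod_cast hb0.le)]
    rw [Nat.cast_natAbs]
    exact congrArg (fun z : ℤ => (z:ℝ)) (abs_of_nonneg hb0.le)
  · obtain ⟨t, ht⟩ := hceven
    have h : Even c := ⟨t, by omega⟩
    exact (Int.natAbs_even.mpr h).two_dvd
  · have hXc : (d:ℝ)*((n:ℝ)-(d:ℝ))/((n:ℝ)-1) = (((c:ℤ)):ℝ)^2 := by
      rw [div_eq_iff hn1R]
      exact_mod_cast hZc.symm
    rw [hXc, Real.sqrt_sq (by exact_mod_cast hc0)]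
    rw [Nat.cast_natAbs]
    exact congrArg (fun z : ℤ => (z:ℝ)) (abs_of_nonneg hc0)
end
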